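/- arXiv:1802.03265 — 5 statements merged into one kernel-verified Lean document; each statement's English description precedes it below -/
import Mathlib

section
/- If d ≥ 2 and ω : A^{*^d} → B^{*^d} is a d-dimensional morphism defined on the set of all finite d-dimensional words (i.e., it respects concatenation in every direction whenever defined), then ω is uniform: there exists a shape n ∈ ℕ^d such that ω(a) has shape n for every letter a ∈ A. -/
/-- A shape of a `d`-dimensional word: a vector of side lengths. -/
abbrev Shape (d : ℕ) := Fin d → ℕ

/-- A finite `d`-dimensional word over alphabet `A`: a shape together with a
function from the corresponding box to `A`. -/
def FWord (A : Type*) (d : ℕ) := Σ n : Shape d, ((∀ j, Fin (n j)) → A)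

/-- The `d`-dimensional word of shape `(1,…,1)` corresponding to a letter. -/
def letter {A : Type*} (d : ℕ) (a : A) : FWord A d := ⟨fun _ => 1, fun _ => a⟩

/-- The concatenation `u ⊙^i v` is well-defined iff the shapes agree in all
coordinates except possibly coordinate `i`. -/
def CatOK {A : Type*} {d : ℕ} (i : Fin d) (u v : FWord A d) : Prop :=
  ∀ j, j ≠ i → u.1 j = v.1 j

/-- Shape of the concatenation in direction `e i`. -/
def catShape {d : ℕ} (i : Fin d) (n m : Shape d) : Shape d :=
  fun j => if j = i then n j + m j else n j

/-- Concatenation `u ⊙^i v` of two `d`-dimensional words in direction `e i`,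
defined when the shapes are compatible. -/
def cat {A : Type*} {d : ℕ} (i : Fin d) (u v : FWord A d) (h : CatOK i u v) :
    FWord A d :=
  ⟨catShape i u.1 v.1, fun a =>
    if hlt : (a i).1 < u.1 i then
      u.2 (fun j => ⟨(a j).1, by
        have h2 := (a j).2
        by_cases hj : j = i
        · subst hj; exact hlt
        · simp only [catShape, if_neg hj] at h2
          exact h2⟩)
    else
      v.2 (fun j => ⟨if j = i then (a j).1 - u.1 i else (a j).1, by
        have h2 := (a j).2
        simp only [catShape] at h2
        split
        · rename_i hj
          simp only [if_pos hj] at h2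
          subst hj
          omega
        · rename_i hj
          have h3 := h j hj
          simp only [if_neg hj] at h2
          omega⟩)⟩

/-- A `d`-dimensional morphism defined on all finite `d`-dimensional words:
whenever `u ⊙^i v` is well-defined, so is `ω u ⊙^i ω v`, and `ω` sends the
former concatenation to the latter. -/
def IsMorphism {A B : Type*} {d : ℕ} (ω : FWord A d → FWord B d) : Prop :=
  ∀ (i : Fin d) (u v : FWord A d) (h : CatOK i u v),
    ∃ h2 : CatOK i (ω u) (ω v), ω (cat i u v h) = cat i (ω u) (ω v) h2

/-- If `d ≥ 2` and `ω : A^{*^d} → B^{*^d}` is a `d`-dimensional morphism defined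
on all finite `d`-dimensional words, then `ω` is uniform: all images of letters
have the same shape. -/
theorem uniform_of_morphism {A B : Type*} {d : ℕ} (hd : 2 ≤ d)
    (ω : FWord A d → FWord B d) (hω : IsMorphism ω) :
    ∃ n : Shape d, ∀ a : A, (ω (letter d a)).1 = n := by
  by_cases hA : Nonempty A
  · obtain ⟨a₀⟩ := hA
    refine ⟨(ω (letter d a₀)).1, fun a => ?_⟩
    funext j
    haveI : Nontrivial (Fin d) := Fin.nontrivial_iff_two_le.mpr hd
    obtain ⟨i, hij⟩ := exists_ne j
    have hok : CatOK i (letter d a₀) (letter d a) := fun _ _ => rfl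
    obtain ⟨h2, -⟩ := hω i _ _ hok
    exact (h2 j (Ne.symm hij)).symm
  · exact ⟨fun _ => 0, fun a => absurd ⟨a⟩ hA⟩
end

section
/- Let d ≥ 1, 1 ≤ i ≤ d, let X ⊆ A^{ℤ^d} be a subshift, and let ω : X → B^{ℤ^d} be a d-dimensional morphism whose restriction to letters is injective and such that the image of each letter is either a single letter or a domino in direction e_i. If there exists a subset M ⊂ B with ω(A) ⊆ (B∖M) ∪ ((B∖M) ⊙^i M), then ω is recognizable in X: every y ∈ B^{ℤ^d} has at most one centered ω-representation (k, x) with x ∈ X. -/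
/-- A configuration: a map `ℤ^d → A`. -/
abbrev Config (A : Type*) (d : ℕ) := (Fin d → ℤ) → A

/-- The shift action: `(σ^k x)_m = x_{m+k}`. -/
def shift {A : Type*} {d : ℕ} (k : Fin d → ℤ) (x : Config A d) : Config A d :=
  fun m => x (m + k)

/-- A set of configurations is shift-invariant. -/
def ShiftInvariant {A : Type*} {d : ℕ} (X : Set (Config A d)) : Prop :=
  ∀ (k : Fin d → ℤ) (x : Config A d), x ∈ X → shift k x ∈ X

/-- A finite word occurs in a configuration (at some position). -/
def Occurs {A : Type*} {d : ℕ} (u : FWord A d) (x : Config A d) : Prop :=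
  ∃ p : Fin d → ℤ, ∀ a : ∀ j, Fin (u.1 j),
    x (fun j => p j + ((a j).1 : ℤ)) = u.2 a

/-- The language of a set of configurations: all finite subwords of its
members. -/
def SubLang {A : Type*} {d : ℕ} (X : Set (Config A d)) : Set (FWord A d) :=
  {u | ∃ x ∈ X, Occurs u x}

/-- The `j`-th canonical basis vector of `ℤ^d`. -/
def unitv {d : ℕ} (j : Fin d) : Fin d → ℤ := fun j' => if j' = j then 1 else 0

/-- `(k, x)` is an `ω`-representation of `y`, i.e. `y = σ^k ω(x)`:
there is a consistent placement function `p` assigning to each `n ∈ ℤ^d` the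
position in `y` of the block `ω(x_n)`, with block origins advancing by the
shapes of the blocks and `p 0 = -k`. -/
def OmegaRep {A B : Type*} {d : ℕ} (ω₀ : A → FWord B d) (y : Config B d)
    (k : Fin d → ℤ) (x : Config A d) : Prop :=
  ∃ p : (Fin d → ℤ) → (Fin d → ℤ),
    p 0 = -k ∧
    (∀ (n : Fin d → ℤ) (j : Fin d),
      p (n + unitv j) = p n + (((ω₀ (x n)).1 j : ℤ) • unitv j)) ∧
    (∀ (n : Fin d → ℤ) (a : ∀ j, Fin ((ω₀ (x n)).1 j)),
      y (fun j => p n j + ((a j).1 : ℤ)) = (ω₀ (x n)).2 a)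

/-- The `ω`-representation `(k, x)` is centered if `0 ≤ k < shape (ω (x 0))`
coordinate-wise. -/
def Centered {A B : Type*} {d : ℕ} (ω₀ : A → FWord B d)
    (k : Fin d → ℤ) (x : Config A d) : Prop :=
  ∀ j, 0 ≤ k j ∧ k j < ((ω₀ (x 0)).1 j : ℤ)

/-- `ω` is recognizable in `X`: every configuration has at most one centered
`ω`-representation with `x ∈ X`. -/
def Recognizable {A B : Type*} {d : ℕ} (ω₀ : A → FWord B d)
    (X : Set (Config A d)) : Prop :=
  ∀ (y : Config B d) (k k' : Fin d → ℤ) (x x' : Config A d),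
    x ∈ X → x' ∈ X →
    OmegaRep ω₀ y k x → Centered ω₀ k x →
    OmegaRep ω₀ y k' x' → Centered ω₀ k' x' → k = k' ∧ x = x'

/-- A set of configurations is aperiodic if it is nonempty and contains no
point with a nontrivial period. -/
def Aperiodic {A : Type*} {d : ℕ} (X : Set (Config A d)) : Prop :=
  X.Nonempty ∧ ∀ x ∈ X, ∀ p : Fin d → ℤ, p ≠ 0 → shift p x ≠ x

/-- The domino `b ⊙^i c` in direction `e i`: the `d`-dimensional word of shape
`(1,…,1) + e i` with first letter `b` and second letter `c`. -/
def domino {B : Type*} {d : ℕ} (i : Fin d) (b c : B) : FWord B d :=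
  ⟨fun j => if j = i then 2 else 1, fun a => if (a i).1 = 0 then b else c⟩

/-- Auxiliary: facts about a single `ω`-representation with markers on the
right. -/
lemma rep_facts_right {A B : Type*} {d : ℕ} (i : Fin d) (ω₀ : A → FWord B d)
    (M : Set B)
    (hM : ∀ a : A, (∃ b, b ∉ M ∧ ω₀ a = letter d b) ∨
      ∃ b c, b ∉ M ∧ c ∈ M ∧ ω₀ a = domino i b c)
    (y : Config B d) (x : Config A d) (p : (Fin d → ℤ) → (Fin d → ℤ))
    (hpr : ∀ (n : Fin d → ℤ) (j : Fin d),
      p (n + unitv j) = p n + (((ω₀ (x n)).1 j : ℤ) • unitv j))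
    (hpv : ∀ (n : Fin d → ℤ) (a : ∀ j, Fin ((ω₀ (x n)).1 j)),
      y (fun j => p n j + ((a j).1 : ℤ)) = (ω₀ (x n)).2 a) :
    ∀ n : Fin d → ℤ,
      (ω₀ (x n) = letter d (y (p n)) ∧ y (p n) ∉ M ∧ y (p n + unitv i) ∉ M)
      ∨ (ω₀ (x n) = domino i (y (p n)) (y (p n + unitv i)) ∧
          y (p n) ∉ M ∧ y (p n + unitv i) ∈ M) := by
  -- first letter of every block is a non-marker, and it equals `y (p n)`
  have hfst : ∀ n : Fin d → ℤ, y (p n) ∉ M := by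
    intro n
    rcases hM (x n) with ⟨b, hb, h⟩ | ⟨b, c, hb, hc, h⟩
    · have h3 := hpv n
      rw [h] at h3
      have h4 := h3 (fun _ => ⟨0, Nat.one_pos⟩)
      simp only [letter, Nat.cast_zero, add_zero] at h4
      rw [h4]; exact hb
    · have h3 := hpv n
      rw [h] at h3
      have h4 := h3 (fun j => ⟨0, by by_cases hj : j = i <;> simp [domino, hj]⟩)
      simp only [domino, Nat.cast_zero, add_zero, if_pos rfl] at h4
      rw [h4]; exact hb
  intro n
  rcases hM (x n) with ⟨b, hb, h⟩ | ⟨b, c, hb, hc, h⟩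
  · -- letter case
    have h3 := hpv n
    rw [h] at h3
    have h4 := h3 (fun _ => ⟨0, Nat.one_pos⟩)
    simp only [letter, Nat.cast_zero, add_zero] at h4
    have hpu : p (n + unitv i) = p n + unitv i := by
      have := hpr n i
      rw [h] at this
      simpa [letter] using this
    refine Or.inl ⟨by rw [h, h4], hfst n, ?_⟩
    have := hfst (n + unitv i)
    rwa [hpu] at this
  · -- domino case
    have h3 := hpv n
    rw [h] at h3
    have h4 : y (p n) = b := by
      simpa [domino] using h3 (fun j => ⟨0, by by_cases hj : j = i <;> simp [domino, hj]⟩)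
    have h5 := h3 (fun j => ⟨if j = i then 1 else 0,
      by by_cases hj : j = i <;> simp [domino, hj]⟩)
    have harg : (fun j => p n j + ((if j = i then (1 : ℕ) else 0 : ℕ) : ℤ))
        = p n + unitv i := by
      funext j
      by_cases hj : j = i <;> simp [unitv, hj]
    rw [harg] at h5
    have h5' : y (p n + unitv i) = c := by simpa [domino] using h5
    exact Or.inr ⟨by rw [h, h4, h5'], hfst n, by rw [h5']; exact hc⟩

/-- Marker-based recognizability criterion (markers on the right): if the
images of letters under `ω` are letters or dominoes in direction `e i`, `ω` is
injective on letters, and there is a set of markers `M ⊆ B` such that every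
image is either a non-marker letter or a domino whose first letter is a
non-marker and whose second letter is a marker, then `ω` is recognizable
in `X`. -/
theorem recognizable_of_markers_right {A B : Type*} {d : ℕ} (i : Fin d)
    [TopologicalSpace A] [DiscreteTopology A]
    (X : Set (Config A d)) (hXinv : ShiftInvariant X) (hXcl : IsClosed X)
    (ω₀ : A → FWord B d) (hinj : Function.Injective ω₀)
    (hshape : ∀ a : A, (∃ b : B, ω₀ a = letter d b) ∨
      ∃ b c : B, ω₀ a = domino i b c)
    (M : Set B)
    (hM : ∀ a : A, (∃ b, b ∉ M ∧ ω₀ a = letter d b) ∨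
      ∃ b c, b ∉ M ∧ c ∈ M ∧ ω₀ a = domino i b c) :
    Recognizable ω₀ X := by
  intro y k k' x x' hx hx' hrep hc hrep' hc'
  obtain ⟨p, hp0, hpr, hpv⟩ := hrep
  obtain ⟨p', hp0', hpr', hpv'⟩ := hrep'
  have hC := rep_facts_right i ω₀ M hM y x p hpr hpv
  have hC' := rep_facts_right i ω₀ M hM y x' p' hpr' hpv'
  -- shapes in directions other than `i` are `1`
  have hsh1 : ∀ (n : Fin d → ℤ) (j : Fin d), j ≠ i → (ω₀ (x n)).1 j = 1 := by
    intro n j hj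
    rcases hC n with ⟨h, -, -⟩ | ⟨h, -, -⟩ <;> rw [h] <;> simp [letter, domino, hj]
  have hsh1' : ∀ (n : Fin d → ℤ) (j : Fin d), j ≠ i → (ω₀ (x' n)).1 j = 1 := by
    intro n j hj
    rcases hC' n with ⟨h, -, -⟩ | ⟨h, -, -⟩ <;> rw [h] <;> simp [letter, domino, hj]
  -- key: determine `k` from `y 0`
  have hkey : ∀ (k₀ : Fin d → ℤ) (x₀ : Config A d)
      (p₀ : (Fin d → ℤ) → (Fin d → ℤ)), p₀ 0 = -k₀ → Centered ω₀ k₀ x₀ →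
      (∀ (n : Fin d → ℤ) (j : Fin d), j ≠ i → (ω₀ (x₀ n)).1 j = 1) →
      (∀ n : Fin d → ℤ,
        (ω₀ (x₀ n) = letter d (y (p₀ n)) ∧ y (p₀ n) ∉ M ∧ y (p₀ n + unitv i) ∉ M)
        ∨ (ω₀ (x₀ n) = domino i (y (p₀ n)) (y (p₀ n + unitv i)) ∧
            y (p₀ n) ∉ M ∧ y (p₀ n + unitv i) ∈ M)) →
      (k₀ = 0 ∧ y 0 ∉ M) ∨ (k₀ = unitv i ∧ y 0 ∈ M) := by
    intro k₀ x₀ p₀ h0 hcen hs1 hCC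
    have hkj : ∀ j, j ≠ i → k₀ j = 0 := by
      intro j hj
      have h1 := hcen j
      rw [hs1 0 j hj] at h1
      omega
    rcases hCC 0 with ⟨h, hm, -⟩ | ⟨h, hm, hm2⟩
    · have hsi : (ω₀ (x₀ 0)).1 i = 1 := by rw [h]; rfl
      have hki : k₀ i = 0 := by have := hcen i; rw [hsi] at this; omega
      have hk0 : k₀ = 0 := by
        funext j; by_cases hj : j = i
        · rw [hj]; exact hki
        · exact hkj j hj
      have hp00 : p₀ 0 = 0 := by rw [h0, hk0, neg_zero]
      exact Or.inl ⟨hk0, by rwa [hp00] at hm⟩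
    · have hsi : (ω₀ (x₀ 0)).1 i = 2 := by rw [h]; simp [domino]
      have hki : k₀ i = 0 ∨ k₀ i = 1 := by
        have := hcen i; rw [hsi] at this; omega
      rcases hki with hki | hki
      · have hk0 : k₀ = 0 := by
          funext j; by_cases hj : j = i
          · rw [hj]; exact hki
          · exact hkj j hj
        have hp00 : p₀ 0 = 0 := by rw [h0, hk0, neg_zero]
        exact Or.inl ⟨hk0, by rwa [hp00] at hm⟩
      · have hk0 : k₀ = unitv i := by
          funext j; by_cases hj : j = i
          · rw [hj]; simpa [unitv] using hki
          · rw [hkj j hj]; simp [unitv, hj]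
        have hp00 : p₀ 0 + unitv i = 0 := by
          rw [h0, hk0]; funext j; simp
        exact Or.inr ⟨hk0, by rwa [hp00] at hm2⟩
  have hK := hkey k x p hp0 hc hsh1 hC
  have hK' := hkey k' x' p' hp0' hc' hsh1' hC'
  have hkk : k = k' := by
    rcases hK with ⟨e, hm⟩ | ⟨e, hm⟩ <;> rcases hK' with ⟨e', hm'⟩ | ⟨e', hm'⟩
    · rw [e, e']
    · exact absurd hm' hm
    · exact absurd hm hm'
    · rw [e, e']
  have hp00 : p 0 = p' 0 := by rw [hp0, hp0', hkk]
  -- forward shape determination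
  have hfwd : ∀ n : Fin d → ℤ, p n = p' n →
      (ω₀ (x n)).1 i = (ω₀ (x' n)).1 i := by
    intro n hn
    rcases hC n with ⟨h, -, h2⟩ | ⟨h, -, h2⟩ <;>
      rcases hC' n with ⟨h', -, h2'⟩ | ⟨h', -, h2'⟩
    · rw [h, h']; rfl
    · rw [hn] at h2; exact absurd h2' h2
    · rw [hn] at h2; exact absurd h2 h2'
    · rw [h, h']; simp [domino]
  -- recursion at a point, in terms of explicit shapes
  have hstep : ∀ (n : Fin d → ℤ),
      ((ω₀ (x n)).1 i = 1 → p (n + unitv i) = p n + unitv i) ∧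
      ((ω₀ (x n)).1 i = 2 → p (n + unitv i) = p n + unitv i + unitv i) := by
    intro n
    constructor <;> intro hs <;> have := hpr n i <;> rw [hs] at this <;>
      rw [this]
    · simp
    · rw [show ((2:ℕ):ℤ) = 2 by norm_num, two_smul]; abel
  have hstep' : ∀ (n : Fin d → ℤ),
      ((ω₀ (x' n)).1 i = 1 → p' (n + unitv i) = p' n + unitv i) ∧
      ((ω₀ (x' n)).1 i = 2 → p' (n + unitv i) = p' n + unitv i + unitv i) := by
    intro n
    constructor <;> intro hs <;> have := hpr' n i <;> rw [hs] at this <;>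
      rw [this]
    · simp
    · rw [show ((2:ℕ):ℤ) = 2 by norm_num, two_smul]; abel
  -- backward shape determination
  have hbwd : ∀ n : Fin d → ℤ, p (n + unitv i) = p' (n + unitv i) →
      (ω₀ (x n)).1 i = (ω₀ (x' n)).1 i := by
    intro n hn
    rcases hC n with ⟨h, hm, h2⟩ | ⟨h, hm, h2⟩ <;>
      rcases hC' n with ⟨h', hm', h2'⟩ | ⟨h', hm', h2'⟩
    · rw [h, h']; rfl
    · -- x letter, x' domino : contradiction
      exfalso
      have e1 : p (n + unitv i) = p n + unitv i :=
        (hstep n).1 (by rw [h]; rfl)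
      have e2 : p' (n + unitv i) = p' n + unitv i + unitv i :=
        (hstep' n).2 (by rw [h']; simp [domino])
      have : p n = p' n + unitv i := by
        have := hn
        rw [e1, e2] at this
        exact add_right_cancel this
      rw [this] at hm
      exact hm h2'
    · exfalso
      have e1 : p (n + unitv i) = p n + unitv i + unitv i :=
        (hstep n).2 (by rw [h]; simp [domino])
      have e2 : p' (n + unitv i) = p' n + unitv i :=
        (hstep' n).1 (by rw [h']; rfl)
      have : p' n = p n + unitv i := by
        have := hn
        rw [e1, e2] at this
        exact (add_right_cancel this.symm)
      rw [this] at hm'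
      exact hm' h2
    · rw [h, h']; simp [domino]
  -- main induction on total displacement
  have hsum : ∀ (n m : Fin d → ℤ) (j : Fin d), (∀ j', j' ≠ j → m j' = n j') →
      (m j).natAbs + 1 = (n j).natAbs →
      (∑ j', (m j').natAbs) + 1 = ∑ j', (n j').natAbs := by
    intro n m j h1 h2
    rw [← Finset.sum_erase_add Finset.univ _ (Finset.mem_univ j),
        ← Finset.sum_erase_add Finset.univ (fun j' => (n j').natAbs)
          (Finset.mem_univ j),
        Finset.sum_congr rfl
          (fun j' hj' => by rw [h1 j' (Finset.ne_of_mem_erase hj')])]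
    omega
  have main : ∀ (N : ℕ) (n : Fin d → ℤ), (∑ j, (n j).natAbs) ≤ N →
      p n = p' n := by
    intro N
    induction N with
    | zero =>
      intro n hn
      have hn0 : n = 0 := by
        funext j
        have h1 : (n j).natAbs = 0 := by
          have h2 : (∑ j', (n j').natAbs) = 0 := Nat.le_zero.mp hn
          have := Finset.sum_eq_zero_iff.mp h2 j (Finset.mem_univ j)
          exact this
        simp only [Pi.zero_apply]
        omega
      rw [hn0]; exact hp00
    | succ N ih =>
      intro n hn
      by_cases h0 : (∑ j, (n j).natAbs) ≤ N
      · exact ih n h0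
      · have hex : ∃ j, n j ≠ 0 := by
          by_contra hc0
          push_neg at hc0
          simp [hc0] at h0
        obtain ⟨j, hj⟩ := hex
        rcases lt_or_gt_of_ne hj with hneg | hpos
        · -- n j < 0 : step from m := n + e_j
          have hmj : ∀ j', j' ≠ j → (n + unitv j) j' = n j' := by
            intro j' hj'; simp [unitv, hj']
          have hmjj : ((n + unitv j) j).natAbs + 1 = (n j).natAbs := by
            have hu : (n + unitv j) j = n j + 1 := by simp [unitv]
            rw [hu]; omega
          have hms : (∑ j', ((n + unitv j) j').natAbs) ≤ N := by
            have := hsum n (n + unitv j) j hmj hmjj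
            omega
          have hpm := ih _ hms
          have hsj : (ω₀ (x n)).1 j = (ω₀ (x' n)).1 j := by
            by_cases hji : j = i
            · subst hji; exact hbwd n hpm
            · rw [hsh1 n j hji, hsh1' n j hji]
          have e1 := hpr n j
          have e2 := hpr' n j
          rw [hsj] at e1
          rw [e1, e2] at hpm
          exact add_right_cancel hpm
        · -- n j > 0 : step from m := n - e_j
          have hnm : n = (n - unitv j) + unitv j := by abel
          have hmj : ∀ j', j' ≠ j → (n - unitv j) j' = n j' := by
            intro j' hj'; simp [unitv, hj']
          have hmjj : ((n - unitv j) j).natAbs + 1 = (n j).natAbs := by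
            have hu : (n - unitv j) j = n j - 1 := by simp [unitv]
            rw [hu]; omega
          have hms : (∑ j', ((n - unitv j) j').natAbs) ≤ N := by
            have := hsum n (n - unitv j) j hmj hmjj
            omega
          have hpm := ih _ hms
          have hsj : (ω₀ (x (n - unitv j))).1 j = (ω₀ (x' (n - unitv j))).1 j := by
            by_cases hji : j = i
            · subst hji; exact hfwd _ hpm
            · rw [hsh1 _ j hji, hsh1' _ j hji]
          rw [hnm, hpr, hpr', hpm, hsj]
  have hpp : ∀ n : Fin d → ℤ, p n = p' n := fun n => main _ n le_rfl
  refine ⟨hkk, ?_⟩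
  funext n
  have hn := hpp n
  have hnu : p n + unitv i = p' n + unitv i := by rw [hn]
  rcases hC n with ⟨h, hm, h2⟩ | ⟨h, hm, h2⟩ <;>
    rcases hC' n with ⟨h', hm', h2'⟩ | ⟨h', hm', h2'⟩
  · exact hinj (by rw [h, h', hn])
  · rw [hn] at h2; exact absurd h2' h2
  · rw [hn] at h2; exact absurd h2 h2'
  · exact hinj (by rw [h, h', hn])
end

section
/- Let d ≥ 1, 1 ≤ i ≤ d, let X ⊆ A^{ℤ^d} be a subshift, and let ω : X → B^{ℤ^d} be a d-dimensional morphism whose restriction to letters is injective and such that the image of each letter is either a single letter or a domino in direction e_i. If there exists a subset M ⊂ B with ω(A) ⊆ (B∖M) ∪ (M ⊙^i (B∖M)), then ω is recognizable in X. -/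
/-!
Letter images carry no marker and every domino image starts with a marker, so the block
`ω(x_n)` sitting at position `q` of `y` can be read off `y` alone: it is the domino
`y_q ⊙^i y_{q+e_i}` if `y_q ∈ M` and the letter `y_q` otherwise. Hence the block lengths, and
with them the placement of the blocks, propagate from the origin in every direction, forwards
from the first cell of a block and backwards from the cell two steps before the next block
(a marker there signals a domino, since the last cell of a block is never a marker). The
centering vector is read off `y_{-e_i}` in the same way, and injectivity of `ω` on letters
recovers `x` from the blocks.
-/

lemma unitv_eq_single {d : ℕ} (j : Fin d) : unitv j = Pi.single j 1 := by
  funext j'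
  simp [unitv, Pi.single_apply]

lemma mem_of_add_unitv_mem_iff {d : ℕ} {S : Set (Fin d → ℤ)} (h0 : 0 ∈ S)
    (hS : ∀ n j, n + unitv j ∈ S ↔ n ∈ S) (n : Fin d → ℤ) : n ∈ S := by
  -- the group of translations preserving `S`
  let H : AddSubgroup (Fin d → ℤ) :=
    { carrier := {v | ∀ m, m + v ∈ S ↔ m ∈ S}
      add_mem' := fun {v w} hv hw m => by rw [← add_assoc, hw, hv]
      zero_mem' := fun m => by rw [add_zero]
      neg_mem' := fun {v} hv m => by rw [← hv, neg_add_cancel_right] }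
  have hH : n ∈ H := by
    rw [pi_eq_sum_univ' n]
    exact AddSubgroup.sum_mem _ fun j _ =>
      AddSubgroup.zsmul_mem _ (fun m => by rw [← unitv_eq_single]; exact hS m j) _
  simpa using (hH 0).2 h0

def LeftMarked {A B : Type*} {d : ℕ} (i : Fin d) (ω₀ : A → FWord B d) (M : Set B) : Prop :=
  ∀ a : A, (∃ b, b ∉ M ∧ ω₀ a = letter d b) ∨ ∃ b c, b ∈ M ∧ c ∉ M ∧ ω₀ a = domino i b c

structure IsPlacement {A B : Type*} {d : ℕ} (ω₀ : A → FWord B d) (y : Config B d)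
    (x : Config A d) (p : (Fin d → ℤ) → (Fin d → ℤ)) : Prop where
  step : ∀ n j, p (n + unitv j) = p n + (((ω₀ (x n)).1 j : ℤ) • unitv j)
  read : ∀ n (a : ∀ j, Fin ((ω₀ (x n)).1 j)), y (fun j => p n j + ((a j).1 : ℤ)) = (ω₀ (x n)).2 a

lemma OmegaRep.exists_isPlacement {A B : Type*} {d : ℕ} {ω₀ : A → FWord B d} {y : Config B d}
    {k : Fin d → ℤ} {x : Config A d} (h : OmegaRep ω₀ y k x) :
    ∃ p, p 0 = -k ∧ IsPlacement ω₀ y x p :=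
  let ⟨p, h0, hstep, hread⟩ := h
  ⟨p, h0, hstep, hread⟩

open Classical in
noncomputable def readBlock {B : Type*} {d : ℕ} (i : Fin d) (M : Set B) (y : Config B d)
    (q : Fin d → ℤ) : FWord B d :=
  if y q ∈ M then domino i (y q) (y (q + unitv i)) else letter d (y q)

open Classical in
lemma readBlock_shape {B : Type*} {d : ℕ} (i : Fin d) (M : Set B) (y : Config B d)
    (q : Fin d → ℤ) (j : Fin d) :
    (readBlock i M y q).1 j = if j = i ∧ y q ∈ M then 2 else 1 := by
  unfold readBlock
  by_cases hq : y q ∈ M <;> by_cases hj : j = i <;> simp [hq, hj, domino, letter]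

namespace IsPlacement

variable {A B : Type*} {d : ℕ} {i : Fin d} {ω₀ : A → FWord B d} {M : Set B}
  {y : Config B d} {x : Config A d} {p : (Fin d → ℤ) → (Fin d → ℤ)}

lemma read_letter (hP : IsPlacement ω₀ y x p) {n : Fin d → ℤ} {b : B}
    (hb : ω₀ (x n) = letter d b) : y (p n) = b := by
  have h := hP.read n
  rw [hb] at h
  simpa [letter] using h (fun _ => ⟨0, Nat.one_pos⟩)

lemma read_domino (hP : IsPlacement ω₀ y x p) {n : Fin d → ℤ} {b c : B}
    (hbc : ω₀ (x n) = domino i b c) : y (p n) = b ∧ y (p n + unitv i) = c := by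
  have h := hP.read n
  rw [hbc] at h
  constructor
  · simpa [domino] using h (fun j => ⟨0, by simp only [domino]; split <;> omega⟩)
  · have hc := h (fun j => ⟨if j = i then 1 else 0, by simp only [domino]; split <;> omega⟩)
    convert hc using 2
    · funext j
      by_cases hj : j = i <;> simp [unitv, hj]
    · simp [domino]

lemma eq_readBlock (hM : LeftMarked i ω₀ M) (hP : IsPlacement ω₀ y x p) (n : Fin d → ℤ) :
    ω₀ (x n) = readBlock i M y (p n) := by
  rcases hM (x n) with ⟨b, hbM, hb⟩ | ⟨b, c, hbM, -, hbc⟩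
  · have hy := hP.read_letter hb
    rw [hb, readBlock, if_neg (hy ▸ hbM), hy]
  · obtain ⟨hyb, hyc⟩ := hP.read_domino hbc
    rw [hbc, readBlock, if_pos (hyb ▸ hbM), hyb, hyc]

lemma step_readBlock (hM : LeftMarked i ω₀ M) (hP : IsPlacement ω₀ y x p)
    (n : Fin d → ℤ) (j : Fin d) :
    p (n + unitv j) = p n + ((readBlock i M y (p n)).1 j : ℤ) • unitv j := by
  rw [← hP.eq_readBlock hM]
  exact hP.step n j

lemma last_notMem (hM : LeftMarked i ω₀ M) (hP : IsPlacement ω₀ y x p) (n : Fin d → ℤ) :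
    y (p (n + unitv i) - unitv i) ∉ M := by
  rw [hP.step n i]
  rcases hM (x n) with ⟨b, hbM, hb⟩ | ⟨b, c, -, hcM, hbc⟩
  · rw [hb]
    simpa [letter, hP.read_letter hb] using hbM
  · rw [hbc]
    have hq : p n + ((domino i b c).1 i : ℤ) • unitv i - unitv i = p n + unitv i := by
      simp only [domino, if_pos]
      module
    rwa [hq, (hP.read_domino hbc).2]

lemma step_back_readBlock (hM : LeftMarked i ω₀ M) (hP : IsPlacement ω₀ y x p)
    (n : Fin d → ℤ) (j : Fin d) :
    p n = p (n + unitv j) -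
      ((readBlock i M y (p (n + unitv j) - 2 • unitv j)).1 j : ℤ) • unitv j := by
  rcases eq_or_ne j i with rfl | hj
  · rcases hM (x n) with ⟨b, -, hb⟩ | ⟨b, c, hbM, -, hbc⟩
    · have hq : p (n + unitv j) - 2 • unitv j = p (n - unitv j + unitv j) - unitv j := by
        rw [sub_add_cancel, hP.step n j, hb]
        simp only [letter]
        module
      rw [hq, readBlock_shape, if_neg fun h => hP.last_notMem hM _ h.2, hP.step n j, hb]
      simp [letter]
    · have hq : p (n + unitv j) - 2 • unitv j = p n := by
        rw [hP.step n j, hbc]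
        simp only [domino, if_pos]
        module
      rw [hq, readBlock_shape, if_pos ⟨rfl, (hP.read_domino hbc).1 ▸ hbM⟩, hP.step n j, hbc]
      simp [domino]
  · rw [readBlock_shape, if_neg fun h => hj h.1, hP.step_readBlock hM, readBlock_shape,
      if_neg fun h => hj h.1]
    simp

lemma eq_of_map_zero_eq {x' : Config A d} {p' : (Fin d → ℤ) → (Fin d → ℤ)}
    (hM : LeftMarked i ω₀ M) (hP : IsPlacement ω₀ y x p) (hP' : IsPlacement ω₀ y x' p')
    (h0 : p 0 = p' 0) : p = p' := by
  refine funext (mem_of_add_unitv_mem_iff (S := {n | p n = p' n}) h0 fun n j => ?_)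
  simp only [Set.mem_ofPred_eq]
  constructor
  · intro h
    rw [hP.step_back_readBlock hM n j, hP'.step_back_readBlock hM n j, h]
  · intro h
    rw [hP.step_readBlock hM, hP'.step_readBlock hM, h]

open Classical in
lemma centering_eq (hM : LeftMarked i ω₀ M) (hP : IsPlacement ω₀ y x p) {k : Fin d → ℤ}
    (hp0 : p 0 = -k) (hc : Centered ω₀ k x) :
    k = if y (-unitv i) ∈ M then unitv i else 0 := by
  have hk : ∀ j, 0 ≤ k j ∧ k j < if j = i ∧ y (p 0) ∈ M then 2 else 1 := fun j => by
    have := hc j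
    rw [hP.eq_readBlock hM, readBlock_shape] at this
    split_ifs at this ⊢ <;> simpa using this
  have hk_eq : k = k i • unitv i := funext fun j => by
    by_cases hj : j = i
    · simp [unitv, hj]
    · have := hk j
      rw [if_neg fun h => hj h.1] at this
      simp only [Pi.smul_apply, unitv, hj, if_false, smul_zero]
      omega
  have hki : k i = 0 ∨ k i = 1 := by
    have := hk i
    split_ifs at this <;> omega
  rcases hki with h | h
  · rw [h, zero_smul] at hk_eq
    have hlast := hP.last_notMem hM (-unitv i)
    rw [neg_add_cancel, hp0, hk_eq, neg_zero, zero_sub] at hlast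
    rw [if_neg hlast, hk_eq]
  · rw [h, one_smul] at hk_eq
    have hmark : y (p 0) ∈ M := by
      by_contra hm
      have := hk i
      rw [if_neg fun h => hm h.2] at this
      omega
    rw [hp0, hk_eq] at hmark
    rw [if_pos hmark, hk_eq]

end IsPlacement

theorem recognizable_of_markers_left_general {A B : Type*} {d : ℕ} (i : Fin d)
    (X : Set (Config A d))
    (ω₀ : A → FWord B d) (hinj : Function.Injective ω₀)
    (M : Set B)
    (hM : ∀ a : A, (∃ b, b ∉ M ∧ ω₀ a = letter d b) ∨
      ∃ b c, b ∈ M ∧ c ∉ M ∧ ω₀ a = domino i b c) :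
    Recognizable ω₀ X := by
  intro y k k' x x' _ _ hrep hc hrep' hc'
  obtain ⟨p, hp0, hP⟩ := hrep.exists_isPlacement
  obtain ⟨p', hp0', hP'⟩ := hrep'.exists_isPlacement
  have hk : k = k' := (hP.centering_eq hM hp0 hc).trans (hP'.centering_eq hM hp0' hc').symm
  have hp : p = p' := hP.eq_of_map_zero_eq hM hP' (by rw [hp0, hp0', hk])
  refine ⟨hk, funext fun n => hinj ?_⟩
  rw [hP.eq_readBlock hM, hP'.eq_readBlock hM, hp]

/-- Marker-based recognizability criterion (markers on the left): if the
images of letters under `ω` are letters or dominoes in direction `e i`, `ω` is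
injective on letters, and there is a set of markers `M ⊆ B` such that every
image is either a non-marker letter or a domino whose first letter is a
marker and whose second letter is a non-marker, then `ω` is recognizable
in `X`. -/
theorem recognizable_of_markers_left {A B : Type*} {d : ℕ} (i : Fin d)
    [TopologicalSpace A] [DiscreteTopology A]
    (X : Set (Config A d)) (hXinv : ShiftInvariant X) (hXcl : IsClosed X)
    (ω₀ : A → FWord B d) (hinj : Function.Injective ω₀)
    (hshape : ∀ a : A, (∃ b : B, ω₀ a = letter d b) ∨
      ∃ b c : B, ω₀ a = domino i b c)
    (M : Set B)
    (hM : ∀ a : A, (∃ b, b ∉ M ∧ ω₀ a = letter d b) ∨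
      ∃ b c, b ∈ M ∧ c ∉ M ∧ ω₀ a = domino i b c) :
    Recognizable ω₀ X :=
  recognizable_of_markers_left_general i X ω₀ hinj M hM
end

section
/- Let T be a Wang tile set with a set of markers M ⊂ T in direction e_i (i ∈ {1,2}). Then there exists a Wang tile set S and a 2-dimensional morphism ω : Ω_S → Ω_T, mapping each tile of S either to a tile of T∖M or to a domino (T∖M) ⊙^i M, such that ω is recognizable in Ω_S and surjective up to a shift: ω(Ω_S) ∪ σ^{e_i} ω(Ω_S) = Ω_T. -/
/-- The Wang shift of a Wang tile set `T` (tiles are tuples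
`(right, top, left, bottom)` of colors): all valid tilings `ℤ² → T`. -/
def WangShift {V H : Type} (T : Set (V × H × V × H)) :
    Set (Config (V × H × V × H) 2) :=
  {x | ∀ m : Fin 2 → ℤ, x m ∈ T ∧
    (x m).1 = (x (m + unitv 0)).2.2.1 ∧
    (x m).2.1 = (x (m + unitv 1)).2.2.2}

/-- `M` is a set of markers of `T` in direction `e i`: it is a nonempty proper
subset of `T`, two markers are never adjacent in direction `e i` in a valid
tiling, and in the other direction a marker is adjacent only to markers. -/
def IsMarkers {V H : Type} (T M : Set (V × H × V × H)) (i : Fin 2) : Prop :=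
  M.Nonempty ∧ M ⊂ T ∧ ∀ x ∈ WangShift T, ∀ m : Fin 2 → ℤ,
    ¬(x m ∈ M ∧ x (m + unitv i) ∈ M) ∧
    ∀ j, j ≠ i → (x m ∈ M ↔ x (m + unitv j) ∈ M)

/-!
Markers in direction `e₀` are never horizontally adjacent and fill whole columns, so every row of a
valid tiling is cut, column by column, into blocks: a non-marker column together with the marker
column on its right, if there is one. The new tiles are the tiles of `T ∖ M` and the fusions of
such two-column blocks. A tiling by the new tiles decodes into a `T`-tiling by laying its blocks
side by side, and a `T`-tiling is encoded by reading its blocks off its marker columns. Any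
centred representation `y = σ^k ω(x)` must put its blocks exactly at those columns, which gives
recognizability; the shift by `e₀` is needed when the origin lies in a marker column. The case of
direction `e₁` reduces to `e₀` by reflecting tiles and tilings in the diagonal.
-/

namespace FWord

variable {A B : Type*} {d : ℕ}

theorem ext_of_val {u v : FWord A d} (hshape : ∀ j, u.1 j = v.1 j)
    (hval : ∀ (a : ∀ j, Fin (u.1 j)) (b : ∀ j, Fin (v.1 j)),
      (∀ j, (a j : ℕ) = b j) → u.2 a = v.2 b) : u = v := by
  obtain ⟨n, f⟩ := u
  obtain ⟨n', f'⟩ := v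
  obtain rfl : n = n' := funext hshape
  congr
  exact funext fun a => hval a a fun _ => rfl

def map (g : A → B) (u : FWord A d) : FWord B d := ⟨u.1, g ∘ u.2⟩

/-- The word whose axis `j` is the axis `π j` of `u`. -/
def perm (π : Equiv.Perm (Fin d)) (u : FWord A d) : FWord A d :=
  ⟨u.1 ∘ π, fun a => u.2 fun j => Fin.cast (congrArg u.1 (π.apply_symm_apply j)) (a (π.symm j))⟩

theorem perm_symm_perm (π : Equiv.Perm (Fin d)) (u : FWord A d) :
    (u.perm π).perm π.symm = u := by
  refine ext_of_val (fun j => congrArg u.1 (π.apply_symm_apply j)) fun a b hab => ?_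
  refine congrArg u.2 (funext fun j => Fin.ext ?_)
  have hval : ∀ {j j'}, j = j' → (a j : ℕ) = a j' := by rintro _ _ rfl; rfl
  rw [← hab]
  exact hval (π.apply_symm_apply j)

theorem map_domino (g : A → B) (i : Fin d) (b c : A) :
    (domino i b c).map g = domino i (g b) (g c) :=
  ext_of_val (fun _ => rfl) fun a _ hab => by
    simp only [map, domino, Function.comp_def, ← hab i, apply_ite g]

theorem perm_domino (π : Equiv.Perm (Fin d)) (i : Fin d) (b c : A) :
    (domino i b c).perm π = domino (π.symm i) b c := by
  refine ext_of_val (fun j => ?_) fun a a' hab => ?_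
  · simp [perm, domino, Equiv.eq_symm_apply]
  · simp [perm, domino, hab]

end FWord

theorem unitv_comp_symm {d : ℕ} (π : Equiv.Perm (Fin d)) (j : Fin d) :
    unitv j ∘ π.symm = unitv (π j) := by
  funext i
  simp [unitv, Equiv.symm_apply_eq]

namespace OmegaRep

variable {A B C : Type*} {d : ℕ} {ω : A → FWord B d} {y : Config B d} {k : Fin d → ℤ}
  {x : Config A d}

theorem map (g : B → C) (h : OmegaRep ω y k x) :
    OmegaRep (fun a => (ω a).map g) (g ∘ y) k x := by
  obtain ⟨p, h0, hstep, hval⟩ := h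
  exact ⟨p, h0, hstep, fun n a => congrArg g (hval n a)⟩

theorem perm (π : Equiv.Perm (Fin d)) (h : OmegaRep ω y k x) :
    OmegaRep (fun a => (ω a).perm π) (fun m => y (m ∘ π.symm)) (k ∘ π)
      (fun m => x (m ∘ π.symm)) := by
  obtain ⟨p, h0, hstep, hval⟩ := h
  refine ⟨fun n => p (n ∘ π.symm) ∘ π, ?_, fun n j => ?_, fun n a => ?_⟩
  · exact congrArg (· ∘ π) h0
  · have hj : (n + unitv j) ∘ π.symm = n ∘ π.symm + unitv (π j) := by
      rw [← unitv_comp_symm]; rfl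
    funext i
    simp [hj, hstep, FWord.perm, unitv]
  · have hval' := hval (n ∘ π.symm) fun i =>
      Fin.cast (congrArg (ω _).1 (π.apply_symm_apply i)) (a (π.symm i))
    refine (congrArg y (funext fun i => ?_)).trans hval'
    simp only [Function.comp_apply, Equiv.apply_symm_apply]
    rfl

end OmegaRep

theorem eq_of_forall_add_unitv {α : Type*} {d : ℕ} {f : (Fin d → ℤ) → α}
    (h : ∀ n j, f (n + unitv j) = f n) (n : Fin d → ℤ) : f n = f 0 := by
  let G : AddSubgroup (Fin d → ℤ) :=
    { carrier := {v | ∀ m, f (m + v) = f m}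
      zero_mem' := fun m => by rw [add_zero]
      add_mem' := fun ha hb m => by rw [← add_assoc, hb, ha]
      neg_mem' := fun {v} hv m => by rw [← hv (m + -v), neg_add_cancel_right] }
  have hn : n = ∑ j, n j • unitv j := by
    ext i
    simp [unitv]
  have hnG : n ∈ G := hn ▸ G.sum_mem fun j _ => G.zsmul_mem (h · j) _
  simpa using hnG 0

theorem placement_unique {d : ℕ} {δ : (Fin d → ℤ) → Fin d → ℤ} {p q : (Fin d → ℤ) → Fin d → ℤ}
    (hp : ∀ n j, p (n + unitv j) = p n + δ n j • unitv j)
    (hq : ∀ n j, q (n + unitv j) = q n + δ n j • unitv j) (h0 : p 0 = q 0) : p = q := by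
  funext n
  have := eq_of_forall_add_unitv (f := fun n => p n - q n) (fun n j => by simp [hp, hq]) n
  rwa [h0, sub_self, sub_eq_zero] at this

section Vec2

@[simp] theorem vec2_add_unitv_zero (a r : ℤ) : ![a, r] + unitv 0 = ![a + 1, r] := by
  ext j; fin_cases j <;> simp [unitv]

@[simp] theorem vec2_add_unitv_one (a r : ℤ) : ![a, r] + unitv 1 = ![a, r + 1] := by
  ext j; fin_cases j <;> simp [unitv]

theorem vec2_eta (n : Fin 2 → ℤ) : ![n 0, n 1] = n := by
  ext j; fin_cases j <;> rfl

end Vec2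

section Intervals

variable {f : ℤ → ℤ}

theorem sub_le_sub_of_strictMono (hf : StrictMono f) {m n : ℤ} (h : m ≤ n) :
    n - m ≤ f n - f m := by
  induction n, h using Int.leInduction with
  | base => simp
  | succ n _ ih => have := hf (lt_add_one n); omega

theorem existsUnique_le_lt_of_strictMono (hf : StrictMono f) (c : ℤ) :
    ∃! a, f a ≤ c ∧ c < f (a + 1) := by
  obtain ⟨a, ha, hmax⟩ := Int.exists_greatest_of_bdd (P := fun a => f a ≤ c)
    ⟨max 0 (c - f 0), fun a ha => by
      have := sub_le_sub_of_strictMono hf (m := 0) (n := a); omega⟩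
    ⟨min 0 (c - f 0), by have := sub_le_sub_of_strictMono hf (min_le_left 0 (c - f 0)); omega⟩
  refine ⟨a, ⟨ha, not_le.mp fun h => by simpa using hmax _ h⟩, fun b hb => ?_⟩
  have h1 := hf.lt_iff_lt.mp (hb.1.trans_lt (show c < f (a + 1) from
    not_le.mp fun h => by simpa using hmax _ h))
  have h2 := hf.lt_iff_lt.mp (ha.trans_lt hb.2)
  omega

/-- `prefixSum w n = w 0 + ⋯ + w (n - 1)`, extended to negative `n` so that the recursion
`prefixSum_succ` holds everywhere. -/
noncomputable def prefixSum (w : ℤ → ℤ) (n : ℤ) : ℤ :=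
  ∑ k ∈ Finset.Ico 0 n, w k - ∑ k ∈ Finset.Ico n 0, w k

theorem prefixSum_zero (w : ℤ → ℤ) : prefixSum w 0 = 0 := by simp [prefixSum]

theorem prefixSum_succ (w : ℤ → ℤ) (n : ℤ) : prefixSum w (n + 1) = prefixSum w n + w n := by
  rcases le_or_gt 0 n with hn | hn
  · rw [prefixSum, prefixSum, ← Finset.sum_Ico_add_eq_sum_Ico_add_one hn,
      Finset.Ico_eq_empty_of_le hn, Finset.Ico_eq_empty_of_le (by omega : (0 : ℤ) ≤ n + 1)]
    ring
  · rw [prefixSum, prefixSum, ← Finset.insert_Ico_add_one_left_eq_Ico hn,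
      Finset.sum_insert (by simp), Finset.Ico_eq_empty_of_le hn.le,
      Finset.Ico_eq_empty_of_le (by omega : n + 1 ≤ 0)]
    ring

theorem prefixSum_sub_succ (w : ℤ → ℤ) (c a : ℤ) :
    prefixSum w (a + 1) - c = prefixSum w a - c + w a := by
  rw [prefixSum_succ]; ring

end Intervals

open scoped Classical

section Blocks

variable {P : ℤ → Prop}

/-- `f` lists, in increasing order, the positions `c` with `¬ P c`; each is the start of a block
made of `c` and, when `P (c + 1)`, also `c + 1`. -/
def IsBlockEnum (P : ℤ → Prop) (f : ℤ → ℤ) : Prop :=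
  ∀ a, ¬P (f a) ∧ f (a + 1) = f a + if P (f a + 1) then 2 else 1

theorem IsBlockEnum.eq_sub {f : ℤ → ℤ} (hf : IsBlockEnum P f) (a : ℤ) :
    f a = f (a + 1) - if P (f (a + 1) - 1) then 2 else 1 := by
  obtain ⟨hfa, hstep⟩ := hf a
  by_cases h : P (f a + 1)
  · rw [hstep, if_pos h, if_pos (by convert h using 2; ring)]; ring
  · rw [hstep, if_neg h, if_neg (by convert hfa using 2; ring)]; ring

theorem IsBlockEnum.ext {f g : ℤ → ℤ} (hf : IsBlockEnum P f) (hg : IsBlockEnum P g)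
    (h0 : f 0 = g 0) : f = g := by
  funext a
  induction a using Int.induction_on with
  | zero => exact h0
  | succ a ih => rw [(hf a).2, (hg a).2, ih]
  | pred a ih => rw [hf.eq_sub, hg.eq_sub, sub_add_cancel, ih]

noncomputable def nextBlockStart (hP : ∀ c, ¬(P c ∧ P (c + 1))) : Equiv.Perm {c : ℤ // ¬P c} where
  toFun c := if h : P (c + 1) then ⟨c + 2, fun h' => hP _ ⟨h, by rwa [add_assoc]⟩⟩ else ⟨c + 1, h⟩
  invFun c := if h : P (c - 1) then ⟨c - 2, fun h' => hP _ ⟨h', by convert h using 1; ring⟩⟩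
    else ⟨c - 1, h⟩
  left_inv c := by
    by_cases h : P (c + 1)
    · simp [h, show (c : ℤ) + 2 - 1 = c + 1 by ring]
    · simp [h, c.2]
  right_inv c := by
    by_cases h : P (c - 1)
    · simp [h, show (c : ℤ) - 2 + 1 = c - 1 by ring]
    · simp [h, c.2]

theorem coe_nextBlockStart (hP : ∀ c, ¬(P c ∧ P (c + 1))) (c : {c : ℤ // ¬P c}) :
    (nextBlockStart hP c : ℤ) = c + if P (c + 1) then 2 else 1 := by
  by_cases h : P (c + 1) <;> simp [nextBlockStart, h]

theorem exists_isBlockEnum (hP : ∀ c, ¬(P c ∧ P (c + 1))) :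
    ∃ f, IsBlockEnum P f ∧ f 0 = if P 0 then -1 else 0 := by
  let c₀ : {c : ℤ // ¬P c} :=
    if h : P 0 then ⟨-1, fun h' => hP (-1) ⟨h', by simpa using h⟩⟩ else ⟨0, h⟩
  refine ⟨fun a => ((nextBlockStart hP ^ a) c₀ : ℤ),
    fun a => ⟨((nextBlockStart hP ^ a) c₀).2, ?_⟩, ?_⟩
  · beta_reduce
    rw [add_comm a, zpow_add, zpow_one, Equiv.Perm.mul_apply, coe_nextBlockStart]
  · by_cases h : P 0 <;> simp [c₀, h]

end Blocks

namespace MarkerFusion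

variable {V H : Type}

/-- Colours of the horizontal edges of the new tiles: `inl h` for a single tile, `inr (h, h', m)`
for a domino with halves coloured `h`, `h'` and a middle vertical colour `m`. -/
abbrev EdgeColor (V H : Type) := H ⊕ H × H × V

abbrev FusedTile (V H : Type) := V × EdgeColor V H × V × EdgeColor V H

def EdgeColor.fst : EdgeColor V H → H := Sum.elim id Prod.fst

def EdgeColor.snd : EdgeColor V H → H := Sum.elim id fun c => c.2.1

def single (t : V × H × V × H) : FusedTile V H := (t.1, .inl t.2.1, t.2.2.1, .inl t.2.2.2)

/-- The bottom edge of `fused t t' w` records the colour `t.1` shared by `t` and `t'`; hence the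
top edge has to carry the shared colour `w` of the domino above. -/
def fused (t t' : V × H × V × H) (w : V) : FusedTile V H :=
  (t'.1, .inr (t.2.1, t'.2.1, w), t.2.2.1, .inr (t.2.2.2, t'.2.2.2, t.1))

def fusedTileSet (T M : Set (V × H × V × H)) : Set (FusedTile V H) :=
  {s | (∃ t ∈ T \ M, s = single t) ∨
    ∃ t ∈ T \ M, ∃ t' ∈ T ∩ M, t'.2.2.1 = t.1 ∧ ∃ w, s = fused t t' w}

def width (s : FusedTile V H) : ℕ := Sum.elim (fun _ => 1) (fun _ => 2) s.2.2.2

def firstTile (s : FusedTile V H) : V × H × V × H :=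
  Sum.elim (fun b => (s.1, s.2.1.fst, s.2.2.1, b)) (fun b => (b.2.2, s.2.1.fst, s.2.2.1, b.1))
    s.2.2.2

def lastTile (s : FusedTile V H) : V × H × V × H :=
  Sum.elim (fun b => (s.1, s.2.1.fst, s.2.2.1, b)) (fun b => (s.1, s.2.1.snd, b.2.2, b.2.1))
    s.2.2.2

def decode (s : FusedTile V H) : FWord (V × H × V × H) 2 :=
  Sum.elim (fun _ => letter 2 (firstTile s)) (fun _ => domino 0 (firstTile s) (lastTile s)) s.2.2.2

theorem lastTile_single (t : V × H × V × H) : lastTile (single t) = t := rfl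

theorem lastTile_fused {t t' : V × H × V × H} (h : t'.2.2.1 = t.1) (w : V) :
    lastTile (fused t t' w) = t' := by
  obtain ⟨r', a', l', b'⟩ := t'
  subst h
  rfl

theorem decode_single (t : V × H × V × H) : decode (single t) = letter 2 t := rfl

theorem decode_fused {t t' : V × H × V × H} (h : t'.2.2.1 = t.1) (w : V) :
    decode (fused t t' w) = domino 0 t t' := by
  obtain ⟨r', a', l', b'⟩ := t'
  subst h
  rfl

theorem width_single (t : V × H × V × H) : width (single t) = 1 := rfl

theorem width_eq_one_or_two (s : FusedTile V H) : width s = 1 ∨ width s = 2 := by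
  obtain ⟨r, a, l, b | b⟩ := s
  exacts [.inl rfl, .inr rfl]

theorem firstTile_left (s : FusedTile V H) : (firstTile s).2.2.1 = s.2.2.1 := by
  obtain ⟨r, a, l, b | b⟩ := s <;> rfl

theorem lastTile_right (s : FusedTile V H) : (lastTile s).1 = s.1 := by
  obtain ⟨r, a, l, b | b⟩ := s <;> rfl

theorem lastTile_eq_firstTile {s : FusedTile V H} (h : width s = 1) : lastTile s = firstTile s := by
  obtain ⟨r, a, l, b | b⟩ := s
  · rfl
  · simp [width] at h

theorem firstTile_right_eq_lastTile_left {s : FusedTile V H} (h : width s = 2) :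
    (firstTile s).1 = (lastTile s).2.2.1 := by
  obtain ⟨r, a, l, b | b⟩ := s
  · simp [width] at h
  · rfl

theorem decode_fst_zero (s : FusedTile V H) : (decode s).1 0 = width s := by
  obtain ⟨r, a, l, b | b⟩ := s <;> rfl

theorem decode_fst_one (s : FusedTile V H) : (decode s).1 1 = 1 := by
  obtain ⟨r, a, l, b | b⟩ := s <;> rfl

theorem decode_fst_pos (s : FusedTile V H) (j : Fin 2) : 0 < (decode s).1 j := by
  fin_cases j
  · rcases width_eq_one_or_two s with h | h <;> simp [decode_fst_zero, h]
  · simp [decode_fst_one]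

theorem decode_snd (s : FusedTile V H) (a : ∀ j, Fin ((decode s).1 j)) :
    (decode s).2 a = if (a 0 : ℕ) = 0 then firstTile s else lastTile s := by
  obtain ⟨r, c, l, b | b⟩ := s
  · rw [if_pos (Nat.lt_one_iff.mp (a 0).2)]
    rfl
  · rfl

section TileSet

variable {T M : Set (V × H × V × H)} {s s' : FusedTile V H}

theorem firstTile_mem (hs : s ∈ fusedTileSet T M) : firstTile s ∈ T \ M := by
  obtain ⟨t, ht, rfl⟩ | ⟨t, ht, t', -, -, w, rfl⟩ := hs <;> exact ht

theorem lastTile_mem (hs : s ∈ fusedTileSet T M) : lastTile s ∈ T := by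
  obtain ⟨t, ht, rfl⟩ | ⟨t, -, t', ht', hshare, w, rfl⟩ := hs
  · exact ht.1
  · obtain ⟨r', a', l', b'⟩ := t'
    subst hshare
    exact ht'.1

theorem lastTile_mem_iff (hs : s ∈ fusedTileSet T M) : lastTile s ∈ M ↔ width s = 2 := by
  obtain ⟨t, ht, rfl⟩ | ⟨t, -, t', ht', hshare, w, rfl⟩ := hs
  · exact iff_of_false ht.2 (by simp [width_single])
  · obtain ⟨r', a', l', b'⟩ := t'
    subst hshare
    exact iff_of_true ht'.2 rfl

theorem vertical_match (hs : s ∈ fusedTileSet T M) (hs' : s' ∈ fusedTileSet T M)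
    (h : s.2.1 = s'.2.2.2) :
    width s' = width s ∧ (firstTile s).2.1 = (firstTile s').2.2.2 ∧
      (lastTile s).2.1 = (lastTile s').2.2.2 := by
  obtain ⟨t, -, rfl⟩ | ⟨t, -, t', -, -, w, rfl⟩ := hs <;>
    obtain ⟨u, -, rfl⟩ | ⟨u, -, u', -, -, w', rfl⟩ := hs' <;>
    simp_all [single, fused, width, firstTile, lastTile, EdgeColor.fst, EdgeColor.snd]

theorem eq_of_vertical (hs : s ∈ fusedTileSet T M) (hs' : s' ∈ fusedTileSet T M)
    (h : s.2.1 = s'.2.2.2) :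
    s = if width s = 2 then fused (firstTile s) (lastTile s) (firstTile s').1
      else single (firstTile s) := by
  obtain ⟨t, -, rfl⟩ | ⟨t, -, t', -, hshare, w, rfl⟩ := hs
  · rfl
  · obtain ⟨u, -, rfl⟩ | ⟨u, -, u', -, -, w', rfl⟩ := hs'
    · simp [single, fused] at h
    · obtain ⟨r', a', l', b'⟩ := t'
      subst hshare
      simp_all [fused, width, firstTile, lastTile, EdgeColor.fst, EdgeColor.snd]

end TileSet

section Layout

variable {T M : Set (V × H × V × H)} {x : Config (FusedTile V H) 2} {y : Config (V × H × V × H) 2}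
  {pos : ℤ → ℤ} {k : Fin 2 → ℤ}

def colWidth (x : Config (FusedTile V H) 2) (a : ℤ) : ℤ := width (x ![a, 0])

theorem colWidth_eq_one_or_two (x : Config (FusedTile V H) 2) (a : ℤ) :
    colWidth x a = 1 ∨ colWidth x a = 2 := by
  rcases width_eq_one_or_two (x ![a, 0]) with h | h <;> simp [colWidth, h]

theorem width_eq_colWidth (hx : x ∈ WangShift (fusedTileSet T M)) (n : Fin 2 → ℤ) :
    (width (x n) : ℤ) = colWidth x (n 0) := by
  have hstep : ∀ a r, width (x ![a, r + 1]) = width (x ![a, r]) := fun a r => by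
    have := (vertical_match (hx ![a, r]).1 (hx _).1 (hx ![a, r]).2.2).1
    rwa [vec2_add_unitv_one] at this
  have hcol : ∀ a r, (width (x ![a, r]) : ℤ) = colWidth x a := fun a r => by
    induction r using Int.induction_on with
    | zero => rfl
    | succ r ih => rw [hstep, ih]
    | pred r ih => rw [← ih, ← hstep, sub_add_cancel]
  rw [← vec2_eta n, hcol]
  rfl

/-- `y` is `x` decoded, column `a` of `x` occupying columns `pos a, …, pos (a + 1) - 1` of `y`. -/
def IsLayout (x : Config (FusedTile V H) 2) (pos : ℤ → ℤ) (y : Config (V × H × V × H) 2) : Prop :=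
  ∀ a r, y ![pos a, r] = firstTile (x ![a, r]) ∧ y ![pos (a + 1) - 1, r] = lastTile (x ![a, r])

theorem placement_add_unitv (hx : x ∈ WangShift (fusedTileSet T M))
    (hpos : ∀ a, pos (a + 1) = pos a + colWidth x a) (n : Fin 2 → ℤ) (j : Fin 2) :
    ![pos ((n + unitv j) 0), (n + unitv j) 1] =
      ![pos (n 0), n 1] + ((decode (x n)).1 j : ℤ) • unitv j := by
  ext i
  fin_cases j <;> fin_cases i <;>
    simp [unitv, hpos, decode_fst_zero, decode_fst_one, width_eq_colWidth hx]

theorem placement_zero {k : Fin 2 → ℤ} (hk0 : pos 0 = -k 0) (hk1 : k 1 = 0) :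
    (fun n : Fin 2 → ℤ => ![pos (n 0), n 1]) 0 = -k := by
  ext i
  fin_cases i <;> simp [hk0, hk1]

theorem isLayout_of_omegaRep (hrep : OmegaRep decode y k x)
    (hx : x ∈ WangShift (fusedTileSet T M))
    (hpos : ∀ a, pos (a + 1) = pos a + colWidth x a) (hk0 : pos 0 = -k 0) (hk1 : k 1 = 0) :
    IsLayout x pos y := by
  obtain ⟨p, hp0, hstep, hval⟩ := hrep
  obtain rfl := placement_unique (q := fun n => ![pos (n 0), n 1]) hstep
    (placement_add_unitv hx hpos) (hp0.trans (placement_zero hk0 hk1).symm)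
  intro a r
  have hw : (width (x ![a, r]) : ℤ) = colWidth x a := width_eq_colWidth hx ![a, r]
  have hpos0 := decode_fst_pos (x ![a, r])
  have hfirst := hval ![a, r] fun j => ⟨0, hpos0 j⟩
  have hlast := hval ![a, r] fun j => ⟨(decode (x ![a, r])).1 j - 1, by grind⟩
  rw [decode_snd] at hfirst hlast
  refine ⟨by simpa using hfirst, ?_⟩
  have hcorner : y ![pos (a + 1) - 1, r] =
      if width (x ![a, r]) - 1 = 0 then firstTile (x ![a, r]) else lastTile (x ![a, r]) := by
    convert hlast using 2
    · have := hpos0 0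
      rw [decode_fst_zero] at this
      ext i
      fin_cases i <;> simp [decode_fst_zero, decode_fst_one, hpos, ← hw]
      omega
    · simp [decode_fst_zero]
  rcases width_eq_one_or_two (x ![a, r]) with h | h
  · simpa [h, lastTile_eq_firstTile h] using hcorner
  · simpa [h] using hcorner

theorem IsLayout.omegaRep (hlay : IsLayout x pos y) (hx : x ∈ WangShift (fusedTileSet T M))
    (hpos : ∀ a, pos (a + 1) = pos a + colWidth x a) (hk0 : pos 0 = -k 0) (hk1 : k 1 = 0) :
    OmegaRep decode y k x := by
  refine ⟨fun n => ![pos (n 0), n 1], placement_zero hk0 hk1, placement_add_unitv hx hpos,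
    fun n => ?_⟩
  obtain ⟨a, r, rfl⟩ : ∃ a r, n = ![a, r] := ⟨_, _, (vec2_eta n).symm⟩
  intro o
  have ho1 : (o 1 : ℕ) = 0 := by simpa [decode_fst_one] using (o 1).2
  have ho0 : (o 0 : ℕ) < width (x ![a, r]) := (o 0).2.trans_eq (decode_fst_zero _)
  rw [decode_snd]
  split_ifs with h
  · convert (hlay a r).1 using 2
    ext i
    fin_cases i <;> simp [h, ho1]
  · have hw : width (x ![a, r]) = 2 := by
      rcases width_eq_one_or_two (x ![a, r]) with h' | h' <;> omega
    have hcol : colWidth x a = 2 := by simpa [hw] using (width_eq_colWidth hx ![a, r]).symm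
    have ho0' : (o 0 : ℕ) = 1 := by omega
    convert (hlay a r).2 using 2
    ext i
    fin_cases i
    · simp [hpos, hcol, ho0']
      ring
    · simp [ho1]

theorem strictMono_of_colWidth (hpos : ∀ a, pos (a + 1) = pos a + colWidth x a) :
    StrictMono pos :=
  strictMono_int_of_lt_succ fun a => by
    rcases colWidth_eq_one_or_two x a with h | h <;> rw [hpos, h] <;> omega

theorem IsLayout.mem_wangShift (hlay : IsLayout x pos y) (hx : x ∈ WangShift (fusedTileSet T M))
    (hpos : ∀ a, pos (a + 1) = pos a + colWidth x a) : y ∈ WangShift T := by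
  intro m
  obtain ⟨c, r, rfl⟩ : ∃ c r, m = ![c, r] := ⟨_, _, (vec2_eta m).symm⟩
  obtain ⟨a, ⟨hac, hca⟩, -⟩ := existsUnique_le_lt_of_strictMono (strictMono_of_colWidth hpos) c
  have hw : ∀ r, (width (x ![a, r]) : ℤ) = colWidth x a := fun r => width_eq_colWidth hx ![a, r]
  have hsucc := hpos a
  have hw12 := colWidth_eq_one_or_two x a
  obtain ⟨half, hhalf, hy⟩ : ∃ half ∈ ({firstTile, lastTile} : Set (FusedTile V H → _)),
      ∀ r', y ![c, r'] = half (x ![a, r']) := by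
    rcases eq_or_ne c (pos a) with rfl | hc
    · exact ⟨firstTile, by simp, fun r' => (hlay a r').1⟩
    · refine ⟨lastTile, by simp, fun r' => ?_⟩
      rw [show c = pos (a + 1) - 1 by omega]
      exact (hlay a r').2
  refine ⟨?_, ?_, ?_⟩
  · rw [hy]
    rcases hhalf with rfl | rfl
    exacts [(firstTile_mem (hx _).1).1, lastTile_mem (hx _).1]
  · rw [vec2_add_unitv_zero]
    rcases eq_or_ne (c + 1) (pos (a + 1)) with hc | hc
    · have hright := (hx ![a, r]).2.1
      rw [vec2_add_unitv_zero] at hright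
      rw [hc, show c = pos (a + 1) - 1 by omega, (hlay a r).2, (hlay (a + 1) r).1, lastTile_right,
        firstTile_left, hright]
    · have h2 : width (x ![a, r]) = 2 := by have := hw r; omega
      rw [show c = pos a by omega, (hlay a r).1, show pos a + 1 = pos (a + 1) - 1 by omega,
        (hlay a r).2, firstTile_right_eq_lastTile_left h2]
  · have hup := (hx ![a, r]).2.2
    rw [vec2_add_unitv_one] at hup ⊢
    obtain ⟨-, h1, h2⟩ := vertical_match (hx ![a, r]).1 (hx _).1 hup
    rw [hy, hy]
    rcases hhalf with rfl | rfl
    exacts [h1, h2]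

theorem exists_isLayout (hx : x ∈ WangShift (fusedTileSet T M))
    (hpos : ∀ a, pos (a + 1) = pos a + colWidth x a) : ∃ y, IsLayout x pos y := by
  have hblock := existsUnique_le_lt_of_strictMono (strictMono_of_colWidth hpos)
  choose blk hblk huniq using hblock
  refine ⟨fun m => if m 0 = pos (blk (m 0)) then firstTile (x ![blk (m 0), m 1])
    else lastTile (x ![blk (m 0), m 1]), fun a r => ?_⟩
  have hsucc := hpos a
  have hw : (width (x ![a, r]) : ℤ) = colWidth x a := width_eq_colWidth hx ![a, r]
  have hw12 := colWidth_eq_one_or_two x a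
  have hfirst : blk (pos a) = a := (huniq _ a ⟨le_rfl, by omega⟩).symm
  have hlast : blk (pos (a + 1) - 1) = a := (huniq _ a ⟨by omega, by omega⟩).symm
  simp only [Matrix.cons_val_zero, Matrix.cons_val_one, Matrix.cons_val_fin_one, hfirst, hlast,
    if_true, true_and]
  split_ifs with h
  · exact (lastTile_eq_firstTile (by omega)).symm
  · rfl

theorem mem_wangShift_of_omegaRep (hrep : OmegaRep decode y k x)
    (hx : x ∈ WangShift (fusedTileSet T M)) (hk1 : k 1 = 0) : y ∈ WangShift T := by
  have hpos := prefixSum_sub_succ (colWidth x) (k 0)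
  exact (isLayout_of_omegaRep (pos := fun a => prefixSum (colWidth x) a - k 0) hrep hx hpos
    (by simp [prefixSum_zero]) hk1).mem_wangShift hx hpos

end Layout

section Encoding

variable {T M : Set (V × H × V × H)} {y : Config (V × H × V × H) 2} {f : ℤ → ℤ}

/-- Fuses each column `f a` of `y` with column `f a + 1` when the latter is a marker column, as
read off row `0`. -/
noncomputable def encode (M : Set (V × H × V × H)) (y : Config (V × H × V × H) 2) (f : ℤ → ℤ) :
    Config (FusedTile V H) 2 := fun n =>
  if y ![f (n 0) + 1, 0] ∈ M then
    fused (y ![f (n 0), n 1]) (y ![f (n 0) + 1, n 1]) (y ![f (n 0), n 1 + 1]).1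
  else single (y ![f (n 0), n 1])

theorem encode_apply (a r : ℤ) : encode M y f ![a, r] =
    if y ![f a + 1, 0] ∈ M then fused (y ![f a, r]) (y ![f a + 1, r]) (y ![f a, r + 1]).1
    else single (y ![f a, r]) := rfl

theorem colWidth_encode (hf : IsBlockEnum (fun c => y ![c, 0] ∈ M) f) (a : ℤ) :
    f (a + 1) = f a + colWidth (encode M y f) a := by
  rw [(hf a).2, colWidth, encode_apply]
  split_ifs <;> rfl

theorem isLayout_encode (hy : y ∈ WangShift T) (hf : IsBlockEnum (fun c => y ![c, 0] ∈ M) f) :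
    IsLayout (encode M y f) f y := by
  intro a r
  rw [(hf a).2, encode_apply]
  split_ifs with h
  · have hshare := (hy ![f a, r]).2.1
    rw [vec2_add_unitv_zero] at hshare
    exact ⟨rfl, by rw [lastTile_fused hshare.symm]; ring_nf⟩
  · exact ⟨rfl, by rw [lastTile_single, add_sub_cancel_right]⟩

theorem encode_mem (hy : y ∈ WangShift T) (hcol : ∀ c r, y ![c, r] ∈ M ↔ y ![c, 0] ∈ M)
    (hf : IsBlockEnum (fun c => y ![c, 0] ∈ M) f) :
    encode M y f ∈ WangShift (fusedTileSet T M) := by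
  intro n
  obtain ⟨a, r, rfl⟩ : ∃ a r, n = ![a, r] := ⟨_, _, (vec2_eta n).symm⟩
  have hfa : y ![f a, r] ∈ T \ M := ⟨(hy _).1, fun h => (hf a).1 ((hcol _ _).1 h)⟩
  have hshare := (hy ![f a, r]).2.1
  have hup := (hy ![f a, r]).2.2
  have hup' := (hy ![f a + 1, r]).2.2
  have hright := (hy ![f (a + 1) - 1, r]).2.1
  simp only [vec2_add_unitv_zero, vec2_add_unitv_one, sub_add_cancel] at hshare hup hup' hright ⊢
  refine ⟨?_, ?_, ?_⟩
  · rw [encode_apply]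
    split_ifs with h
    · exact .inr ⟨_, hfa, _, ⟨(hy _).1, (hcol _ _).2 h⟩, hshare.symm, _, rfl⟩
    · exact .inl ⟨_, hfa, rfl⟩
  · have hlay := isLayout_encode hy hf
    rwa [← lastTile_right, ← firstTile_left, ← (hlay a r).2, ← (hlay (a + 1) r).1]
  · rw [encode_apply, encode_apply]
    split_ifs <;> simp [fused, single, hup, hup']

end Encoding

section Recognizability

variable {T M : Set (V × H × V × H)} {x : Config (FusedTile V H) 2} {y : Config (V × H × V × H) 2}
  {pos : ℤ → ℤ}

theorem IsLayout.colWidth_eq_two_iff (hlay : IsLayout x pos y)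
    (hx : x ∈ WangShift (fusedTileSet T M)) (hpos : ∀ a, pos (a + 1) = pos a + colWidth x a)
    (a : ℤ) : colWidth x a = 2 ↔ y ![pos a + 1, 0] ∈ M := by
  have hw : (width (x ![a, 0]) : ℤ) = colWidth x a := rfl
  rcases colWidth_eq_one_or_two x a with h | h
  · rw [show pos a + 1 = pos (a + 1) by rw [hpos, h], (hlay (a + 1) 0).1]
    exact iff_of_false (by omega) (firstTile_mem (hx _).1).2
  · rw [show pos a + 1 = pos (a + 1) - 1 by rw [hpos, h]; ring, (hlay a 0).2,
      lastTile_mem_iff (hx _).1]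
    omega

theorem IsLayout.isBlockEnum (hlay : IsLayout x pos y) (hx : x ∈ WangShift (fusedTileSet T M))
    (hpos : ∀ a, pos (a + 1) = pos a + colWidth x a) :
    IsBlockEnum (fun c => y ![c, 0] ∈ M) pos := by
  intro a
  refine ⟨show y ![pos a, 0] ∉ M by rw [(hlay a 0).1]; exact (firstTile_mem (hx _).1).2, ?_⟩
  show pos (a + 1) = pos a + if y ![pos a + 1, 0] ∈ M then 2 else 1
  rw [hpos, ← hlay.colWidth_eq_two_iff hx hpos]
  rcases colWidth_eq_one_or_two x a with h | h <;> simp [h]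

theorem IsLayout.eq_encode (hlay : IsLayout x pos y) (hx : x ∈ WangShift (fusedTileSet T M))
    (hpos : ∀ a, pos (a + 1) = pos a + colWidth x a) : x = encode M y pos := by
  funext n
  obtain ⟨a, r, rfl⟩ : ∃ a r, n = ![a, r] := ⟨_, _, (vec2_eta n).symm⟩
  have hup := (hx ![a, r]).2.2
  rw [vec2_add_unitv_one] at hup
  have hw : (width (x ![a, r]) : ℤ) = colWidth x a := width_eq_colWidth hx ![a, r]
  rw [eq_of_vertical (hx _).1 (hx _).1 hup, encode_apply, ← hlay.colWidth_eq_two_iff hx hpos,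
    ← (hlay a r).1, ← (hlay a (r + 1)).1]
  by_cases h : colWidth x a = 2
  · rw [if_pos (by omega), if_pos h, ← (hlay a r).2, show pos (a + 1) - 1 = pos a + 1 by
      rw [hpos, h]; ring]
  · rw [if_neg (by omega), if_neg h]

theorem IsLayout.eq_ite_of_centered (hlay : IsLayout x pos y)
    (hx : x ∈ WangShift (fusedTileSet T M)) (hpos : ∀ a, pos (a + 1) = pos a + colWidth x a)
    {k : Fin 2 → ℤ} (hk : Centered decode k x) (hk0 : pos 0 = -k 0) :
    pos 0 = if y ![0, 0] ∈ M then -1 else 0 := by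
  have hw : (width (x 0) : ℤ) = colWidth x 0 := width_eq_colWidth hx 0
  have := hk 0
  rw [decode_fst_zero] at this
  rcases (by grind [colWidth_eq_one_or_two] : k 0 = 0 ∨ k 0 = 1 ∧ colWidth x 0 = 2) with
    h | ⟨h, hw2⟩
  · have h0 : pos 0 = 0 := by rw [hk0, h, neg_zero]
    have : y ![pos 0, 0] ∉ M := (hlay.isBlockEnum hx hpos 0).1
    rw [h0] at this
    rw [if_neg this, h0]
  · have h0 : pos 0 = -1 := by rw [hk0, h]
    have : y ![pos 0 + 1, 0] ∈ M := (hlay.colWidth_eq_two_iff hx hpos 0).1 hw2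
    rw [h0, neg_add_cancel] at this
    rw [if_pos this, h0]

theorem eq_encode_of_centered (hx : x ∈ WangShift (fusedTileSet T M)) {k : Fin 2 → ℤ}
    (hrep : OmegaRep decode y k x) (hk : Centered decode k x) :
    ∃ f, IsBlockEnum (fun c => y ![c, 0] ∈ M) f ∧ (f 0 = if y ![0, 0] ∈ M then -1 else 0) ∧
      k = ![-f 0, 0] ∧ x = encode M y f := by
  have hk1 : k 1 = 0 := by
    have := hk 1
    rw [decode_fst_one] at this
    omega
  set pos := fun a => prefixSum (colWidth x) a - k 0
  have hpos : ∀ a, pos (a + 1) = pos a + colWidth x a := prefixSum_sub_succ _ _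
  have hpos0 : pos 0 = -k 0 := by simp [pos, prefixSum_zero]
  have hlay := isLayout_of_omegaRep hrep hx hpos hpos0 hk1
  refine ⟨pos, hlay.isBlockEnum hx hpos, hlay.eq_ite_of_centered hx hpos hk hpos0, ?_,
    hlay.eq_encode hx hpos⟩
  ext i
  fin_cases i <;> simp [hpos0, hk1]

theorem recognizable_decode (T M : Set (V × H × V × H)) :
    Recognizable decode (WangShift (fusedTileSet T M)) := by
  intro y k k' x x' hx hx' hrep hk hrep' hk'
  obtain ⟨f, hf, hf0, rfl, rfl⟩ := eq_encode_of_centered (M := M) hx hrep hk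
  obtain ⟨f', hf', hf0', rfl, rfl⟩ := eq_encode_of_centered (M := M) hx' hrep' hk'
  obtain rfl := hf.ext hf' (hf0.trans hf0'.symm)
  exact ⟨rfl, rfl⟩

end Recognizability

end MarkerFusion

def HasRecognizableMarkerMorphism {V H : Type} (T M : Set (V × H × V × H)) (i : Fin 2) : Prop :=
  ∃ (V' H' : Type) (S : Set (V' × H' × V' × H'))
    (ω₀ : (V' × H' × V' × H') → FWord (V × H × V × H) 2),
    (∀ s ∈ S, (∃ t, t ∈ T ∧ t ∉ M ∧ ω₀ s = letter 2 t) ∨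
      (∃ t t', t ∈ T ∧ t ∉ M ∧ t' ∈ M ∧ ω₀ s = domino i t t')) ∧
    (∀ x ∈ WangShift S, ∃ y ∈ WangShift T, OmegaRep ω₀ y 0 x) ∧
    Recognizable ω₀ (WangShift S) ∧
    (∀ y, y ∈ WangShift T ↔ ∃ x ∈ WangShift S,
      OmegaRep ω₀ y 0 x ∨ OmegaRep ω₀ y (unitv i) x)

section MarkersZero

variable {V H : Type} {T M : Set (V × H × V × H)} {y : Config (V × H × V × H) 2}

theorem IsMarkers.not_mem_and_mem_add_one (hM : IsMarkers T M 0) (hy : y ∈ WangShift T) (c : ℤ) :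
    ¬(y ![c, 0] ∈ M ∧ y ![c + 1, 0] ∈ M) := by
  simpa only [vec2_add_unitv_zero] using (hM.2.2 y hy ![c, 0]).1

theorem IsMarkers.mem_iff_mem_row_zero (hM : IsMarkers T M 0) (hy : y ∈ WangShift T) (c r : ℤ) :
    y ![c, r] ∈ M ↔ y ![c, 0] ∈ M := by
  have hstep : ∀ r, y ![c, r] ∈ M ↔ y ![c, r + 1] ∈ M := fun r => by
    simpa only [vec2_add_unitv_one] using (hM.2.2 y hy ![c, r]).2 1 (by decide)
  induction r using Int.induction_on with
  | zero => rfl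
  | succ r ih => exact (hstep r).symm.trans ih
  | pred r ih => exact (hstep _).trans (by rwa [sub_add_cancel])

end MarkersZero

open MarkerFusion in
theorem hasRecognizableMarkerMorphism_zero {V H : Type} {T M : Set (V × H × V × H)}
    (hM : IsMarkers T M 0) : HasRecognizableMarkerMorphism T M 0 := by
  refine ⟨V, EdgeColor V H, fusedTileSet T M, decode, ?_, fun x hx => ?_, recognizable_decode T M,
    fun y => ⟨fun hy => ?_, ?_⟩⟩
  · rintro s (⟨t, ht, rfl⟩ | ⟨t, ht, t', ht', hshare, w, rfl⟩)
    · exact .inl ⟨t, ht.1, ht.2, decode_single t⟩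
    · exact .inr ⟨t, t', ht.1, ht.2, ht'.2, decode_fused hshare w⟩
  · have hpos := prefixSum_succ (colWidth x)
    obtain ⟨y, hlay⟩ := exists_isLayout hx hpos
    exact ⟨y, hlay.mem_wangShift hx hpos, hlay.omegaRep hx hpos (by simp [prefixSum_zero]) rfl⟩
  · obtain ⟨f, hf, hf0⟩ := exists_isBlockEnum (hM.not_mem_and_mem_add_one hy)
    have hx := encode_mem hy (hM.mem_iff_mem_row_zero hy) hf
    have hrep := (isLayout_encode hy hf).omegaRep hx (colWidth_encode hf) (k := ![-f 0, 0])
      (by simp) rfl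
    refine ⟨_, hx, ?_⟩
    by_cases h : y ![0, 0] ∈ M
    · refine .inr (by convert hrep using 1; ext i; fin_cases i <;> simp [unitv, hf0, h])
    · refine .inl (by convert hrep using 1; ext i; fin_cases i <;> simp [hf0, h])
  · rintro ⟨x, hx, hrep | hrep⟩ <;> exact mem_wangShift_of_omegaRep hrep hx (by simp [unitv])

section Transpose

variable {α β α' β' : Type}

/-- Reflection of a Wang tile `(right, top, left, bottom)` in the main diagonal. -/
def transposeTile (t : α × β × α × β) : β × α × β × α := (t.2.1, t.1, t.2.2.2, t.2.2.1)

def transposeConfig (y : Config (α × β × α × β) 2) : Config (β × α × β × α) 2 :=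
  fun m => transposeTile (y (m ∘ Equiv.swap 0 1))

def transposeWord (u : FWord (α × β × α × β) 2) : FWord (β × α × β × α) 2 :=
  (u.map transposeTile).perm (Equiv.swap 0 1)

def transposeMorphism (ω : α' × β' × α' × β' → FWord (α × β × α × β) 2) :
    β' × α' × β' × α' → FWord (β × α × β × α) 2 :=
  fun s => transposeWord (ω (transposeTile s))

theorem transposeTile_transposeTile (t : α × β × α × β) : transposeTile (transposeTile t) = t :=
  rfl

theorem mem_image_transposeTile {T : Set (α × β × α × β)} {t : β × α × β × α} :
    t ∈ transposeTile '' T ↔ transposeTile t ∈ T :=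
  ⟨by rintro ⟨t, ht, rfl⟩; exact ht, fun ht => ⟨_, ht, rfl⟩⟩

theorem transposeTile_image_image (T : Set (α × β × α × β)) :
    transposeTile '' (transposeTile '' T) = T := by
  rw [Set.image_image]
  exact Set.image_id' T

theorem transposeConfig_transposeConfig (y : Config (α × β × α × β) 2) :
    transposeConfig (transposeConfig y) = y := by
  funext m
  simp [transposeConfig, transposeTile_transposeTile, Function.comp_def]

theorem transposeWord_transposeWord (u : FWord (α × β × α × β) 2) :
    transposeWord (transposeWord u) = u :=
  FWord.perm_symm_perm (Equiv.swap 0 1) u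

theorem transposeMorphism_transposeMorphism (ω : α' × β' × α' × β' → FWord (α × β × α × β) 2) :
    transposeMorphism (transposeMorphism ω) = ω :=
  funext fun s => transposeWord_transposeWord (ω s)

theorem transposeWord_letter (t : α × β × α × β) :
    transposeWord (letter 2 t) = letter 2 (transposeTile t) := rfl

theorem transposeWord_domino (t t' : α × β × α × β) :
    transposeWord (domino 0 t t') = domino 1 (transposeTile t) (transposeTile t') := by
  rw [transposeWord, FWord.map_domino, FWord.perm_domino]
  rfl

theorem add_unitv_comp_swap (m : Fin 2 → ℤ) (j : Fin 2) :
    (m + unitv j) ∘ Equiv.swap 0 1 = m ∘ Equiv.swap 0 1 + unitv (Equiv.swap 0 1 j) := by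
  rw [← unitv_comp_symm]; rfl

theorem transposeConfig_mem_wangShift {T : Set (α × β × α × β)} {y : Config (α × β × α × β) 2}
    (hy : y ∈ WangShift T) : transposeConfig y ∈ WangShift (transposeTile '' T) := by
  intro m
  obtain ⟨hmem, hright, htop⟩ := hy (m ∘ Equiv.swap 0 1)
  refine ⟨mem_image_transposeTile.2 hmem, ?_, ?_⟩ <;>
    simp only [transposeConfig, transposeTile, add_unitv_comp_swap] <;> simpa

theorem transposeConfig_mem_wangShift_iff {T : Set (α × β × α × β)} {y : Config (α × β × α × β) 2} :
    transposeConfig y ∈ WangShift (transposeTile '' T) ↔ y ∈ WangShift T :=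
  ⟨fun h => by simpa [transposeConfig_transposeConfig, transposeTile_image_image] using
    transposeConfig_mem_wangShift h, transposeConfig_mem_wangShift⟩

theorem mem_wangShift_image_transposeTile {T : Set (α × β × α × β)}
    {x : Config (β × α × β × α) 2} :
    x ∈ WangShift (transposeTile '' T) ↔ transposeConfig x ∈ WangShift T := by
  conv_lhs => rw [← transposeConfig_transposeConfig x]
  exact transposeConfig_mem_wangShift_iff

theorem transposeConfig_apply_comp_swap (x : Config (α × β × α × β) 2) (m : Fin 2 → ℤ) :
    transposeConfig x (m ∘ Equiv.swap 0 1) = transposeTile (x m) := by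
  simp [transposeConfig, Function.comp_def]

theorem OmegaRep.transpose {ω : α' × β' × α' × β' → FWord (α × β × α × β) 2}
    {y : Config (α × β × α × β) 2} {k : Fin 2 → ℤ} {x : Config (α' × β' × α' × β') 2}
    (h : OmegaRep ω y k x) :
    OmegaRep (transposeMorphism ω) (transposeConfig y) (k ∘ Equiv.swap 0 1) (transposeConfig x) :=
  (h.map transposeTile).perm (Equiv.swap 0 1)

theorem omegaRep_transposeMorphism_iff {ω : α' × β' × α' × β' → FWord (α × β × α × β) 2}
    {y : Config (β × α × β × α) 2} {k : Fin 2 → ℤ} {x : Config (β' × α' × β' × α') 2} :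
    OmegaRep (transposeMorphism ω) y k x ↔
      OmegaRep ω (transposeConfig y) (k ∘ Equiv.swap 0 1) (transposeConfig x) := by
  constructor
  · intro h
    simpa [transposeMorphism_transposeMorphism] using h.transpose
  · intro h
    simpa [transposeConfig_transposeConfig, Function.comp_def] using h.transpose

theorem Centered.of_transposeMorphism {ω : α' × β' × α' × β' → FWord (α × β × α × β) 2}
    {k : Fin 2 → ℤ} {x : Config (β' × α' × β' × α') 2} (h : Centered (transposeMorphism ω) k x) :
    Centered ω (k ∘ Equiv.swap 0 1) (transposeConfig x) :=
  fun j => by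
    have := h (Equiv.swap 0 1 j)
    simp only [transposeMorphism, transposeWord, FWord.perm, FWord.map, Function.comp_apply,
      Equiv.swap_apply_self] at this
    exact this

theorem IsMarkers.transpose {T M : Set (α × β × α × β)} (hM : IsMarkers T M 1) :
    IsMarkers (transposeTile '' T) (transposeTile '' M) 0 := by
  obtain ⟨hne, hsub, hmark⟩ := hM
  refine ⟨hne.image _, ⟨Set.image_mono hsub.1, fun h => hsub.2 fun t ht => ?_⟩, fun x hx m => ?_⟩
  · exact mem_image_transposeTile.1 (h ⟨t, ht, rfl⟩)
  · obtain ⟨hnot, hiff⟩ := hmark _ (mem_wangShift_image_transposeTile.1 hx) (m ∘ Equiv.swap 0 1)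
    simp only [mem_image_transposeTile, ← transposeConfig_apply_comp_swap, add_unitv_comp_swap]
    refine ⟨by simpa using hnot, fun j hj => ?_⟩
    obtain rfl : j = 1 := by omega
    simpa using hiff 0 (by decide)

end Transpose

theorem HasRecognizableMarkerMorphism.of_transpose {V H : Type} {T M : Set (V × H × V × H)}
    (h : HasRecognizableMarkerMorphism (transposeTile '' T) (transposeTile '' M) 0) :
    HasRecognizableMarkerMorphism T M 1 := by
  obtain ⟨V', H', S, ω, hω, hdec, hrec, hsurj⟩ := h
  refine ⟨H', V', transposeTile '' S, transposeMorphism ω, ?_, fun x hx => ?_, ?_, fun y => ?_⟩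
  · rintro _ ⟨s, hs, rfl⟩
    rcases hω s hs with ⟨t, ht, htM, he⟩ | ⟨t, t', ht, htM, ht'M, he⟩
    · refine .inl ⟨transposeTile t, mem_image_transposeTile.1 ht,
        mt mem_image_transposeTile.2 htM, ?_⟩
      rw [transposeMorphism, transposeTile_transposeTile, he, transposeWord_letter]
    · refine .inr ⟨transposeTile t, transposeTile t', mem_image_transposeTile.1 ht,
        mt mem_image_transposeTile.2 htM, mem_image_transposeTile.1 ht'M, ?_⟩
      rw [transposeMorphism, transposeTile_transposeTile, he, transposeWord_domino]
  · obtain ⟨y, hy, hrep⟩ := hdec _ (mem_wangShift_image_transposeTile.1 hx)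
    refine ⟨transposeConfig y, mem_wangShift_image_transposeTile.1 hy,
      omegaRep_transposeMorphism_iff.2 ?_⟩
    simpa [transposeConfig_transposeConfig] using hrep
  · intro y k k' x x' hx hx' hrep hk hrep' hk'
    obtain ⟨hkk, hxx⟩ := hrec _ _ _ _ _ (mem_wangShift_image_transposeTile.1 hx)
      (mem_wangShift_image_transposeTile.1 hx') (omegaRep_transposeMorphism_iff.1 hrep)
      hk.of_transposeMorphism (omegaRep_transposeMorphism_iff.1 hrep') hk'.of_transposeMorphism
    exact ⟨(Equiv.swap 0 1).surjective.injective_comp_right hkk,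
      Function.LeftInverse.injective transposeConfig_transposeConfig hxx⟩
  · have htc : Function.Surjective (transposeConfig : Config (H' × V' × H' × V') 2 → _) :=
      Function.RightInverse.surjective transposeConfig_transposeConfig
    have hunitv : unitv 1 ∘ Equiv.swap (0 : Fin 2) 1 = unitv 0 :=
      unitv_comp_symm (Equiv.swap 0 1) 1
    rw [← transposeConfig_mem_wangShift_iff, hsurj, htc.exists]
    simp only [mem_wangShift_image_transposeTile, omegaRep_transposeMorphism_iff,
      hunitv, Pi.zero_comp]

/-- If a Wang tile set `T` has a set of markers `M` in direction `e i`, then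
there is a Wang tile set `S` and a `2`-dimensional morphism
`ω : Ω_S → Ω_T` sending each tile of `S` to a tile of `T ∖ M` or to a domino
`(T ∖ M) ⊙^i M`, which is recognizable in `Ω_S` and onto up to a shift:
`ω(Ω_S) ∪ σ^{e i} ω(Ω_S) = Ω_T`. -/
theorem exists_recognizable_morphism_of_markers {V H : Type}
    (T M : Set (V × H × V × H)) (i : Fin 2) (hM : IsMarkers T M i) :
    ∃ (V' H' : Type) (S : Set (V' × H' × V' × H'))
      (ω₀ : (V' × H' × V' × H') → FWord (V × H × V × H) 2),
      (∀ s ∈ S, (∃ t, t ∈ T ∧ t ∉ M ∧ ω₀ s = letter 2 t) ∨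
        (∃ t t', t ∈ T ∧ t ∉ M ∧ t' ∈ M ∧ ω₀ s = domino i t t')) ∧
      (∀ x ∈ WangShift S, ∃ y ∈ WangShift T, OmegaRep ω₀ y 0 x) ∧
      Recognizable ω₀ (WangShift S) ∧
      (∀ y, y ∈ WangShift T ↔ ∃ x ∈ WangShift S,
        OmegaRep ω₀ y 0 x ∨ OmegaRep ω₀ y (unitv i) x) := by
  fin_cases i
  · exact hasRecognizableMarkerMorphism_zero hM
  · exact (hasRecognizableMarkerMorphism_zero hM.transpose).of_transpose
end

section
/- Let M be the incidence matrix of the substitution ω on the 19 Wang tiles of U and φ = (1+√5)/2. The vector v = (1, 3φ³, φ², φ³, φ, φ², φ⁴, φ³, φ⁴, 2φ³, φ², φ³, φ, φ⁴, φ⁴+φ², φ³, φ⁴, φ³, φ²)ᵗ satisfies M v = φ² v, and the row vector w = (1, 1, φ, φ, φ, φ, φ, φ, φ, φ, φ, φ, φ², φ², φ², φ², φ², φ², φ²) satisfies w M = φ² w. -/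
/-- Lists of the tiles occurring in the image `ω(u_j)` of each tile of `U`
under the substitution `ω = α∘β∘γ`. -/
def im : Fin 19 → List (Fin 19) :=
  ![[17], [16], [15, 11], [13, 9], [17, 8], [16, 8], [15, 8], [14, 8],
    [14, 6], [17, 3], [16, 3], [14, 2], [15, 7, 11, 1], [14, 6, 11, 1],
    [13, 7, 9, 1], [12, 6, 9, 1], [18, 5, 10, 1], [13, 4, 9, 1],
    [14, 2, 8, 0]]

/-- The incidence matrix of `ω` over `ℝ`. -/
noncomputable def Mmat : Matrix (Fin 19) (Fin 19) ℝ := fun i j => ((im j).count i : ℝ)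

/-- The golden ratio. -/
noncomputable def φ : ℝ := (1 + Real.sqrt 5) / 2

/-- The right Perron eigenvector of `M`. -/
noncomputable def vR : Fin 19 → ℝ :=
  ![1, 3 * φ ^ 3, φ ^ 2, φ ^ 3, φ, φ ^ 2, φ ^ 4, φ ^ 3, φ ^ 4, 2 * φ ^ 3,
    φ ^ 2, φ ^ 3, φ, φ ^ 4, φ ^ 4 + φ ^ 2, φ ^ 3, φ ^ 4, φ ^ 3, φ ^ 2]

/-- The left Perron eigenvector of `M`. -/
noncomputable def wL : Fin 19 → ℝ :=
  ![1, 1, φ, φ, φ, φ, φ, φ, φ, φ, φ, φ, φ ^ 2, φ ^ 2, φ ^ 2, φ ^ 2, φ ^ 2,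
    φ ^ 2, φ ^ 2]


/-!
Since `φ² = φ + 1`, every entry of `v` and `w` has the form `a + b φ` with `a, b ∈ ℕ`, and in the
basis `1, φ` multiplication by `φ²` acts as `(a, b) ↦ (a + b, a + 2b)`. So `M v = φ² v` follows
from the two identities `M a = a + b` and `M b = a + 2b` between natural-number vectors, which are
decided by computation; likewise for `w`.
-/

open Matrix

section GoldenAction

variable {m n R : Type*} [Fintype n] [CommSemiring R] {x : R}

theorem sq_mul_add_mul_eq (hx : x ^ 2 = x + 1) (a b : R) :
    x ^ 2 * (a + x * b) = a + b + x * (a + 2 * b) := by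
  calc x ^ 2 * (a + x * b) = a + x * a + x * b + x ^ 2 * b := by nth_rw 1 [hx]; ring
    _ = a + b + x * (a + 2 * b) := by rw [hx]; ring

theorem Matrix.mulVec_add_smul_eq_sq_smul (hx : x ^ 2 = x + 1) (A : Matrix n n R) {a b : n → R}
    (ha : A *ᵥ a = a + b) (hb : A *ᵥ b = a + 2 • b) :
    A *ᵥ (a + x • b) = x ^ 2 • (a + x • b) := by
  rw [mulVec_add, mulVec_smul, ha, hb]
  ext i
  simp only [Pi.add_apply, Pi.smul_apply, smul_eq_mul, sq_mul_add_mul_eq hx]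
  ring

theorem Matrix.add_smul_vecMul_eq_sq_smul (hx : x ^ 2 = x + 1) (A : Matrix n n R) {a b : n → R}
    (ha : a ᵥ* A = a + b) (hb : b ᵥ* A = a + 2 • b) :
    (a + x • b) ᵥ* A = x ^ 2 • (a + x • b) := by
  rw [add_vecMul, smul_vecMul, ha, hb]
  ext i
  simp only [Pi.add_apply, Pi.smul_apply, smul_eq_mul, sq_mul_add_mul_eq hx]
  ring

theorem Matrix.map_natCast_mulVec (A : Matrix m n ℕ) (v : n → ℕ) :
    A.map (Nat.cast : ℕ → R) *ᵥ (Nat.cast ∘ v) = Nat.cast ∘ (A *ᵥ v) :=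
  funext fun i => ((Nat.castRingHom R).map_mulVec A v i).symm

theorem Matrix.natCast_vecMul_map (A : Matrix n m ℕ) (v : n → ℕ) :
    (Nat.cast ∘ v) ᵥ* A.map (Nat.cast : ℕ → R) = Nat.cast ∘ (v ᵥ* A) :=
  funext fun i => ((Nat.castRingHom R).map_vecMul A v i).symm

theorem Matrix.map_natCast_mulVec_add_smul_eq_sq_smul (hx : x ^ 2 = x + 1) {A : Matrix n n ℕ}
    {a b : n → ℕ} (ha : A *ᵥ a = a + b) (hb : A *ᵥ b = a + 2 • b) :
    A.map (Nat.cast : ℕ → R) *ᵥ (Nat.cast ∘ a + x • Nat.cast ∘ b) =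
      x ^ 2 • (Nat.cast ∘ a + x • Nat.cast ∘ b) := by
  apply mulVec_add_smul_eq_sq_smul hx
  · rw [map_natCast_mulVec, ha]; ext; simp
  · rw [map_natCast_mulVec, hb]; ext; simp

theorem Matrix.add_smul_vecMul_map_natCast_eq_sq_smul (hx : x ^ 2 = x + 1) {A : Matrix n n ℕ}
    {a b : n → ℕ} (ha : a ᵥ* A = a + b) (hb : b ᵥ* A = a + 2 • b) :
    (Nat.cast ∘ a + x • Nat.cast ∘ b) ᵥ* A.map (Nat.cast : ℕ → R) =
      x ^ 2 • (Nat.cast ∘ a + x • Nat.cast ∘ b) := by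
  apply add_smul_vecMul_eq_sq_smul hx
  · rw [natCast_vecMul_map, ha]; ext; simp
  · rw [natCast_vecMul_map, hb]; ext; simp

end GoldenAction

theorem φ_sq : φ ^ 2 = φ + 1 :=
  Real.goldenRatio_sq

def Mnat : Matrix (Fin 19) (Fin 19) ℕ :=
  of fun i j => (im j).count i

theorem Mmat_eq_map_Mnat : Mmat = Mnat.map (↑) :=
  rfl

def vR₀ : Fin 19 → ℕ := ![1, 3, 1, 1, 0, 1, 2, 1, 2, 2, 1, 1, 0, 2, 3, 1, 2, 1, 1]

def vR₁ : Fin 19 → ℕ := ![0, 6, 1, 2, 1, 1, 3, 2, 3, 4, 1, 2, 1, 3, 4, 2, 3, 2, 1]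

def wL₀ : Fin 19 → ℕ := ![1, 1, 0, 0, 0, 0, 0, 0, 0, 0, 0, 0, 1, 1, 1, 1, 1, 1, 1]

def wL₁ : Fin 19 → ℕ := ![0, 0, 1, 1, 1, 1, 1, 1, 1, 1, 1, 1, 1, 1, 1, 1, 1, 1, 1]

theorem vR_eq : vR = Nat.cast ∘ vR₀ + φ • Nat.cast ∘ vR₁ := by
  have h3 : φ ^ 3 = 2 * φ + 1 := by linear_combination (φ + 1) * φ_sq
  have h4 : φ ^ 4 = 3 * φ + 2 := by linear_combination (φ ^ 2 + φ + 2) * φ_sq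
  ext i
  fin_cases i <;>
    simp only [vR, vR₀, vR₁, φ_sq, h3, h4, Fin.zero_eta, Fin.mk_one, Fin.reduceFinMk, Fin.isValue,
      cons_val, cons_val_zero, cons_val_one, Pi.add_apply, Pi.smul_apply, Function.comp_apply,
      smul_eq_mul, Nat.cast_ofNat, Nat.cast_one, CharP.cast_eq_zero] <;>
    ring

theorem wL_eq : wL = Nat.cast ∘ wL₀ + φ • Nat.cast ∘ wL₁ := by
  ext i
  fin_cases i <;> simp [wL, wL₀, wL₁, φ_sq, add_comm]

theorem Mnat_mulVec_vR₀ : Mnat *ᵥ vR₀ = vR₀ + vR₁ := by decide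

theorem Mnat_mulVec_vR₁ : Mnat *ᵥ vR₁ = vR₀ + 2 • vR₁ := by decide

theorem wL₀_vecMul_Mnat : wL₀ ᵥ* Mnat = wL₀ + wL₁ := by decide

theorem wL₁_vecMul_Mnat : wL₁ ᵥ* Mnat = wL₀ + 2 • wL₁ := by decide

/-- The vectors `v` and `w` are right and left eigenvectors of the incidence
matrix `M` for the eigenvalue `φ²`. -/
theorem Mmat_eigenvectors :
    Mmat.mulVec vR = φ ^ 2 • vR ∧ Matrix.vecMul wL Mmat = φ ^ 2 • wL := by
  rw [Mmat_eq_map_Mnat, vR_eq, wL_eq]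
  exact ⟨map_natCast_mulVec_add_smul_eq_sq_smul φ_sq Mnat_mulVec_vR₀ Mnat_mulVec_vR₁,
    add_smul_vecMul_map_natCast_eq_sq_smul φ_sq wL₀_vecMul_Mnat wL₁_vecMul_Mnat⟩
end
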